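/- arXiv:1007.4679 — 5 statements merged into one kernel-verified Lean document; each statement's English description precedes it below -/
import Mathlib

section
/- Let a be a positive finite-rank operator on a Hilbert space H. Then a is a finite sum of (orthogonal) projections if and only if tr(a) ≥ rank(a) and tr(a) is a (nonnegative) integer. -/
/-!
If `a = ∑ pⱼ` with projections `pⱼ`, then `ker a = ⋂ ker pⱼ`, so every `pⱼ` has its range inside
the finite-dimensional range of `a`. A finite-rank projection has trace equal to its rank, hence
`tr a = ∑ rank pⱼ` is an integer, and it is at least `rank a` by subadditivity of the rank.

Conversely, diagonalise `a = ∑ₖ μₖ Pᵥₖ` along an orthonormal eigenbasis `v` of its range, so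
`μₖ ≥ 0`, `∑ μₖ = m` and `r = rank a ≤ m`. One splits off a rank-one projection at a time, lowering
the trace by one while keeping at most as many vectors as the trace: an eigenvalue equal to `1` is
removed; if all eigenvalues exceed `1`, one of them is lowered by `1`; otherwise some `μ₁ > 1` and
`μ₂ ≤ 1` are merged as `μ₁ P₁ + μ₂ P₂ = Pₓ + (μ₁ + μ₂ - 1) P_w` with unit vectors `x`, `w` in
the span of `v₁, v₂`.
-/

open scoped InnerProductSpace
open ContinuousLinearMap

variable {H : Type*} [NormedAddCommGroup H] [InnerProductSpace ℂ H] [CompleteSpace H]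

/-- An (orthogonal) projection in `B(H)`: a self-adjoint idempotent. -/
def IsProjOp (p : H →L[ℂ] H) : Prop := IsSelfAdjoint p ∧ p * p = p

/-- The range (support) projection of an operator: the orthogonal projection onto the
closure of its range. -/
noncomputable def rangeProjection (b : H →L[ℂ] H) : H →L[ℂ] H :=
  ((LinearMap.range (b : H →ₗ[ℂ] H)).topologicalClosure).subtypeL ∘L
    (Submodule.orthogonalProjectionOnto (LinearMap.range (b : H →ₗ[ℂ] H)).topologicalClosure)

/-- Murray–von Neumann subequivalence of projections. -/
def MvNSubequiv (p q : H →L[ℂ] H) : Prop :=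
  ∃ v : H →L[ℂ] H, ContinuousLinearMap.adjoint v * v = p ∧ v * ContinuousLinearMap.adjoint v ≤ q

/-- Murray–von Neumann equivalence of projections. -/
def MvNEquiv (p q : H →L[ℂ] H) : Prop :=
  ∃ v : H →L[ℂ] H, ContinuousLinearMap.adjoint v * v = p ∧ v * ContinuousLinearMap.adjoint v = q

/-- The trace of a (positive) operator computed along a Hilbert basis. -/
noncomputable def traceAlong {ι : Type*} (b : HilbertBasis ι ℂ H) (a : H →L[ℂ] H) : ℝ :=
  ∑' i, RCLike.re ⟪b i, a (b i)⟫_ℂ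

open InnerProductSpace

lemma isProjOp_iff_isStarProjection {p : H →L[ℂ] H} : IsProjOp p ↔ IsStarProjection p :=
  ⟨fun h => ⟨h.2, h.1⟩, fun h => ⟨h.2, h.1⟩⟩

section Trace

variable {E : Type*} [NormedAddCommGroup E] [InnerProductSpace ℂ E] {ι : Type*}
  (b : HilbertBasis ι ℂ E)

noncomputable def diagEntries (T : E →L[ℂ] E) (i : ι) : ℝ := RCLike.re ⟪b i, T (b i)⟫_ℂ

lemma hasSum_diagEntries_rankOne_self (x : E) :
    HasSum (diagEntries b (rankOne ℂ x x)) (‖x‖ ^ 2) := by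
  have h := RCLike.hasSum_re ℂ (b.hasSum_inner_mul_inner x x)
  rw [inner_self_eq_norm_sq] at h
  convert h using 2 with i
  simp [diagEntries]

lemma hasSum_diagEntries_sum {κ : Type*} (s : Finset κ) (T : κ → E →L[ℂ] E) (t : κ → ℝ)
    (h : ∀ k ∈ s, HasSum (diagEntries b (T k)) (t k)) :
    HasSum (diagEntries b (∑ k ∈ s, T k)) (∑ k ∈ s, t k) := by
  convert hasSum_sum h using 1
  ext i
  simp [diagEntries]

lemma hasSum_diagEntries_sum_smul_rankOne {κ : Type*} (s : Finset κ) (μ : κ → ℝ) (v : κ → E)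
    (hv : ∀ k ∈ s, ‖v k‖ = 1) :
    HasSum (diagEntries b (∑ k ∈ s, (μ k : ℂ) • rankOne ℂ (v k) (v k))) (∑ k ∈ s, μ k) := by
  refine hasSum_diagEntries_sum b s _ μ fun k hk => ?_
  have e : diagEntries b ((μ k : ℂ) • rankOne ℂ (v k) (v k))
      = fun i => μ k * diagEntries b (rankOne ℂ (v k) (v k)) i := by
    ext i
    simp [diagEntries]
  rw [e]
  simpa [hv k hk] using (hasSum_diagEntries_rankOne_self b (v k)).mul_left (μ k)

lemma traceAlong_sum_smul_rankOne {κ : Type*} (s : Finset κ)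
    (μ : κ → ℝ) (v : κ → E) (hv : ∀ k ∈ s, ‖v k‖ = 1) :
    traceAlong b (∑ k ∈ s, (μ k : ℂ) • rankOne ℂ (v k) (v k)) = ∑ k ∈ s, μ k :=
  (hasSum_diagEntries_sum_smul_rankOne b s μ v hv).tsum_eq

lemma IsStarProjection.hasSum_diagEntries [CompleteSpace E] {p : E →L[ℂ] E}
    (hp : IsStarProjection p) [FiniteDimensional ℂ p.range] :
    HasSum (diagEntries b p) (Module.finrank ℂ p.range) := by
  obtain ⟨_, hp⟩ := isStarProjection_iff_eq_starProjection_range.mp hp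
  let f := stdOrthonormalBasis ℂ p.range
  have := hasSum_diagEntries_sum_smul_rankOne b Finset.univ (fun _ => 1) (fun k => (f k : E))
    fun k _ => f.orthonormal.1 k
  simp only [Complex.ofReal_one, one_smul, ← f.starProjection_eq_sum_rankOne, ← hp] at this
  simpa using this

end Trace

lemma IsStarProjection.inner_apply_self {p : H →L[ℂ] H} (hp : IsStarProjection p) (z : H) :
    ⟪z, p z⟫_ℂ = ⟪p z, p z⟫_ℂ := by
  calc ⟪z, p z⟫_ℂ = ⟪z, p (p z)⟫_ℂ := by rw [← mul_apply_eq_comp, hp.isIdempotentElem.eq]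
    _ = ⟪p z, p z⟫_ℂ := (hp.isSelfAdjoint.isSymmetric z (p z)).symm

lemma ker_le_ker_of_eq_sum_isStarProjection {κ : Type*} [Fintype κ] {p : κ → H →L[ℂ] H}
    (hp : ∀ j, IsStarProjection (p j)) {a : H →L[ℂ] H} (ha : a = ∑ j, p j) (j : κ) :
    a.ker ≤ (p j).ker := by
  intro z hz
  have hsum : ∑ i, ‖p i z‖ ^ 2 = 0 := by
    have h0 : RCLike.re ⟪z, a z⟫_ℂ = 0 := by simp [show a z = 0 from hz]
    rw [ha, sum_apply, inner_sum, map_sum] at h0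
    rw [← h0]
    refine Finset.sum_congr rfl fun i _ => ?_
    rw [(hp i).inner_apply_self, inner_self_eq_norm_sq]
  simpa using
    (Finset.sum_eq_zero_iff_of_nonneg fun i _ => sq_nonneg ‖p i z‖).mp hsum j (Finset.mem_univ j)

lemma range_le_range_of_ker_le_ker {S T : H →L[ℂ] H} (hS : IsSelfAdjoint S)
    (hT : IsSelfAdjoint T) [T.range.HasOrthogonalProjection] (h : T.ker ≤ S.ker) :
    S.range ≤ T.range :=
  calc S.range ≤ S.rangeᗮᗮ := Submodule.le_orthogonal_orthogonal _
    _ = S.kerᗮ := by rw [orthogonal_range, hS.adjoint_eq]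
    _ ≤ T.kerᗮ := Submodule.orthogonal_le h
    _ = T.range := by rw [← T.range.orthogonal_orthogonal, orthogonal_range, hT.adjoint_eq]

lemma LinearMap.finrank_range_finsetSum_le {K V V' : Type*} [DivisionRing K] [AddCommGroup V]
    [Module K V] [AddCommGroup V'] [Module K V'] {κ : Type*} (s : Finset κ) (f : κ → V →ₗ[K] V')
    [∀ k, FiniteDimensional K (f k).range] :
    Module.finrank K (∑ k ∈ s, f k).range ≤ ∑ k ∈ s, Module.finrank K (f k).range := by
  have h := LinearMap.rank_finsetSum_le s f
  simp only [LinearMap.rank, ← Module.finrank_eq_rank, ← Nat.cast_sum] at h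
  exact Module.finrank_le_of_rank_le h

lemma exists_traceAlong_eq_of_eq_sum_isStarProjection {ι κ : Type*} [Fintype κ]
    (b : HilbertBasis ι ℂ H) {p : κ → H →L[ℂ] H} (hp : ∀ j, IsStarProjection (p j))
    {a : H →L[ℂ] H} (ha : a = ∑ j, p j) [FiniteDimensional ℂ a.range] :
    ∃ N : ℕ, traceAlong b a = N ∧ Module.finrank ℂ a.range ≤ N := by
  have hsa : IsSelfAdjoint a := ha ▸ isSelfAdjoint_sum _ fun j _ => (hp j).isSelfAdjoint
  have (j : κ) : FiniteDimensional ℂ (p j).range :=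
    Submodule.finiteDimensional_of_le <| range_le_range_of_ker_le_ker (hp j).isSelfAdjoint hsa
      (ker_le_ker_of_eq_sum_isStarProjection hp ha j)
  refine ⟨∑ j, Module.finrank ℂ (p j).range, ?_, ?_⟩
  · push_cast
    exact (ha ▸ hasSum_diagEntries_sum b _ p _ fun j _ => (hp j).hasSum_diagEntries b).tsum_eq
  · rw [ha, toLinearMap_sum]
    exact LinearMap.finrank_range_finsetSum_le _ _

lemma IsSelfAdjoint.comp_starProjection_range {a : H →L[ℂ] H} (ha : IsSelfAdjoint a)
    [a.range.HasOrthogonalProjection] : a ∘L a.range.starProjection = a := by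
  have h : a.range.starProjection ∘L a = a := by
    ext x
    exact Submodule.starProjection_eq_self_iff.mpr (LinearMap.mem_range_self (a : H →ₗ[ℂ] H) x)
  simpa [adjoint_comp, ha.adjoint_eq, (isSelfAdjoint_starProjection _).adjoint_eq] using
    congr_arg adjoint h

lemma ContinuousLinearMap.IsPositive.exists_orthonormal_eq_sum_smul_rankOne {a : H →L[ℂ] H}
    (ha : a.IsPositive) [FiniteDimensional ℂ a.range] :
    ∃ (v : Fin (Module.finrank ℂ a.range) → H) (μ : Fin (Module.finrank ℂ a.range) → ℝ),
      Orthonormal ℂ v ∧ (∀ k, 0 ≤ μ k) ∧ a = ∑ k, (μ k : ℂ) • rankOne ℂ (v k) (v k) := by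
  let A : a.range →ₗ[ℂ] a.range :=
    (a : H →ₗ[ℂ] H).restrict fun x _ => LinearMap.mem_range_self (a : H →ₗ[ℂ] H) x
  have hA : A.IsPositive :=
    ⟨ha.isSymmetric.restrict_invariant _, fun x => ha.re_inner_nonneg_left x⟩
  let e := hA.isSymmetric.eigenvectorBasis rfl
  refine ⟨fun k => e k, hA.isSymmetric.eigenvalues rfl,
    e.orthonormal.comp_linearIsometry (Submodule.subtypeₗᵢ _), hA.nonneg_eigenvalues rfl, ?_⟩
  have heig (k) : a (e k) = (hA.isSymmetric.eigenvalues rfl k : ℂ) • (e k : H) :=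
    congr_arg Subtype.val (hA.isSymmetric.apply_eigenvectorBasis rfl k)
  conv_lhs => rw [← ha.isSelfAdjoint.comp_starProjection_range, e.starProjection_eq_sum_rankOne]
  simp [comp_finsetSum, comp_rankOne, heig]

/-- The witnesses are chosen so that `diag(μ₁, μ₂) - (μ₁ + μ₂ - 1) w wᵀ`, `w = (p, q)`, is singular;
having trace `1`, it is then `x xᵀ` for the unit vector `x = (c, d)`. -/
lemma exists_mixing_coeffs {μ₁ μ₂ : ℝ} (h₁ : 1 < μ₁) (h₂ : 0 ≤ μ₂) (h₂' : μ₂ ≤ 1) :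
    ∃ c d p q : ℝ, c ^ 2 + d ^ 2 = 1 ∧ p ^ 2 + q ^ 2 = 1 ∧
      c ^ 2 + (μ₁ + μ₂ - 1) * p ^ 2 = μ₁ ∧ d ^ 2 + (μ₁ + μ₂ - 1) * q ^ 2 = μ₂ ∧
      c * d + (μ₁ + μ₂ - 1) * (p * q) = 0 := by
  have hσ : 0 < μ₁ + μ₂ - 1 := by linarith
  have hD : 0 < μ₁ - μ₂ := by linarith
  have hc := Real.sq_sqrt (div_nonneg (mul_nonneg (by linarith) (by linarith)) hD.le :
    0 ≤ μ₁ * (1 - μ₂) / (μ₁ - μ₂))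
  have hd := Real.sq_sqrt (div_nonneg (mul_nonneg h₂ (by linarith)) hD.le :
    0 ≤ μ₂ * (μ₁ - 1) / (μ₁ - μ₂))
  have hp := Real.sq_sqrt (div_nonneg (mul_nonneg (by linarith) (by linarith)) (by positivity) :
    0 ≤ μ₁ * (μ₁ - 1) / ((μ₁ + μ₂ - 1) * (μ₁ - μ₂)))
  have hq := Real.sq_sqrt (div_nonneg (mul_nonneg h₂ (by linarith)) (by positivity) :
    0 ≤ μ₂ * (1 - μ₂) / ((μ₁ + μ₂ - 1) * (μ₁ - μ₂)))
  set c := √(μ₁ * (1 - μ₂) / (μ₁ - μ₂))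
  set d := √(μ₂ * (μ₁ - 1) / (μ₁ - μ₂))
  set p := √(μ₁ * (μ₁ - 1) / ((μ₁ + μ₂ - 1) * (μ₁ - μ₂)))
  set q := √(μ₂ * (1 - μ₂) / ((μ₁ + μ₂ - 1) * (μ₁ - μ₂)))
  have hcross : c * d = (μ₁ + μ₂ - 1) * (p * q) := by
    rw [← sq_eq_sq₀ (by positivity) (by positivity), mul_pow, mul_pow, mul_pow, hc, hd, hp, hq]
    field_simp
  refine ⟨c, d, p, -q, ?_, ?_, ?_, ?_, ?_⟩
  · rw [hc, hd]; field_simp; ring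
  · rw [neg_sq, hp, hq]; field_simp; ring
  · rw [hc, hp]; field_simp; ring
  · rw [neg_sq, hd, hq]; field_simp; ring
  · rw [hcross]; ring

section Mixing

variable {E : Type*} [NormedAddCommGroup E] [InnerProductSpace ℂ E]

lemma smul_rankOne_add_smul_rankOne_eq (v₁ v₂ : E) {μ₁ μ₂ σ c d p q : ℝ}
    (h₁ : c ^ 2 + σ * p ^ 2 = μ₁) (h₂ : d ^ 2 + σ * q ^ 2 = μ₂) (h₁₂ : c * d + σ * (p * q) = 0) :
    (μ₁ : ℂ) • rankOne ℂ v₁ v₁ + (μ₂ : ℂ) • rankOne ℂ v₂ v₂ =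
      rankOne ℂ ((c : ℂ) • v₁ + (d : ℂ) • v₂) ((c : ℂ) • v₁ + (d : ℂ) • v₂) +
        (σ : ℂ) • rankOne ℂ ((p : ℂ) • v₁ + (q : ℂ) • v₂) ((p : ℂ) • v₁ + (q : ℂ) • v₂) := by
  have h₁' : (c : ℂ) ^ 2 + σ * p ^ 2 = μ₁ := by exact_mod_cast h₁
  have h₂' : (d : ℂ) ^ 2 + σ * q ^ 2 = μ₂ := by exact_mod_cast h₂
  have h₁₂' : (c : ℂ) * d + σ * (p * q) = 0 := by exact_mod_cast h₁₂
  ext y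
  simp only [add_apply, smul_apply, rankOne_apply, inner_add_left, inner_smul_left,
    Complex.conj_ofReal, smul_add, smul_smul]
  match_scalars
  · linear_combination (-⟪v₁, y⟫_ℂ) * h₁' - ⟪v₂, y⟫_ℂ * h₁₂'
  · linear_combination (-⟪v₂, y⟫_ℂ) * h₂' - ⟪v₁, y⟫_ℂ * h₁₂'

lemma norm_ofReal_smul_add_ofReal_smul {v₁ v₂ : E} (hv₁ : ‖v₁‖ = 1) (hv₂ : ‖v₂‖ = 1)
    (h₁₂ : ⟪v₁, v₂⟫_ℂ = 0) {c d : ℝ} (hcd : c ^ 2 + d ^ 2 = 1) :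
    ‖(c : ℂ) • v₁ + (d : ℂ) • v₂‖ = 1 := by
  have h := norm_add_sq_eq_norm_sq_add_norm_sq_of_inner_eq_zero (𝕜 := ℂ)
    ((c : ℂ) • v₁) ((d : ℂ) • v₂)
    (by rw [inner_smul_left, inner_smul_right, h₁₂, mul_zero, mul_zero])
  simp only [norm_smul, Complex.norm_real, Real.norm_eq_abs, hv₁, hv₂, mul_one,
    abs_mul_abs_self] at h
  rw [← pow_eq_one_iff_of_nonneg (norm_nonneg _) two_ne_zero, sq, h, ← sq, ← sq, hcd]

lemma exists_smul_rankOne_add_smul_rankOne_eq {v₁ v₂ : E} (hv₁ : ‖v₁‖ = 1) (hv₂ : ‖v₂‖ = 1)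
    (h₁₂ : ⟪v₁, v₂⟫_ℂ = 0) {μ₁ μ₂ : ℝ} (h₁ : 1 < μ₁) (h₂ : 0 ≤ μ₂) (h₂' : μ₂ ≤ 1) :
    ∃ x w : E, ‖x‖ = 1 ∧ ‖w‖ = 1 ∧ (∃ p q : ℂ, w = p • v₁ + q • v₂) ∧
      (μ₁ : ℂ) • rankOne ℂ v₁ v₁ + (μ₂ : ℂ) • rankOne ℂ v₂ v₂ =
        rankOne ℂ x x + ((μ₁ + μ₂ - 1 : ℝ) : ℂ) • rankOne ℂ w w := by
  obtain ⟨c, d, p, q, hcd, hpq, hμ₁, hμ₂, hcross⟩ := exists_mixing_coeffs h₁ h₂ h₂'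
  exact ⟨_, _, norm_ofReal_smul_add_ofReal_smul hv₁ hv₂ h₁₂ hcd,
    norm_ofReal_smul_add_ofReal_smul hv₁ hv₂ h₁₂ hpq, ⟨p, q, rfl⟩,
    smul_rankOne_add_smul_rankOne_eq v₁ v₂ hμ₁ hμ₂ hcross⟩

end Mixing

section Peeling

open Finset Function

variable {E : Type*} [NormedAddCommGroup E] [InnerProductSpace ℂ E] {κ : Type*}

noncomputable def diagonalOp (s : Finset κ) (v : κ → E) (μ : κ → ℝ) : E →L[ℂ] E :=
  ∑ i ∈ s, (μ i : ℂ) • rankOne ℂ (v i) (v i)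

/-- The data of `diagonalOp s v μ`, a positive operator of trace `m` whose rank is at most
`#s ≤ m`. -/
structure FillmoreFamily (m : ℕ) (s : Finset κ) (v : κ → E) (μ : κ → ℝ) : Prop where
  norm_eq_one : ∀ i ∈ s, ‖v i‖ = 1
  inner_eq_zero : ∀ i ∈ s, ∀ j ∈ s, i ≠ j → ⟪v i, v j⟫_ℂ = 0
  nonneg : ∀ i ∈ s, 0 ≤ μ i
  sum_eq : ∑ i ∈ s, μ i = m
  card_le : #s ≤ m

variable {m : ℕ} {s : Finset κ} {v : κ → E} {μ : κ → ℝ}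

lemma FillmoreFamily.exists_eq_one (hF : FillmoreFamily (m + 1) s v μ) (hμ : ∀ i ∈ s, μ i ≤ 1) :
    ∃ k ∈ s, μ k = 1 := by
  by_contra! h
  have hs : s.Nonempty := nonempty_of_sum_ne_zero (by rw [hF.sum_eq]; positivity)
  have hlt := sum_lt_sum_of_nonempty hs fun i hi => lt_of_le_of_ne (hμ i hi) (h i hi)
  rw [hF.sum_eq, sum_const, nsmul_one] at hlt
  have hcard : (#s : ℝ) ≤ m + 1 := by exact_mod_cast hF.card_le
  push_cast at hlt
  linarith

variable [DecidableEq κ]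

lemma diagonalOp_eq_add_erase {k : κ} (hk : k ∈ s) :
    diagonalOp s v μ = (μ k : ℂ) • rankOne ℂ (v k) (v k) + diagonalOp (s.erase k) v μ :=
  (add_sum_erase _ _ hk).symm

lemma diagonalOp_update {k : κ} (hk : k ∈ s) (w : E) (t : ℝ) :
    diagonalOp s (update v k w) (update μ k t) =
      (t : ℂ) • rankOne ℂ w w + diagonalOp (s.erase k) v μ := by
  rw [diagonalOp_eq_add_erase hk, update_self, update_self]
  congr 1
  refine sum_congr rfl fun i hi => ?_
  rw [update_of_ne (ne_of_mem_erase hi), update_of_ne (ne_of_mem_erase hi)]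

lemma sum_update_eq_add_sum_erase {k : κ} (hk : k ∈ s) (t : ℝ) :
    ∑ i ∈ s, update μ k t i = t + ∑ i ∈ s.erase k, μ i := by
  rw [sum_update_of_mem hk, sdiff_singleton_eq_erase]

namespace FillmoreFamily

lemma erase (hF : FillmoreFamily (m + 1) s v μ) {k : κ} (hk : k ∈ s) (h1 : μ k = 1) :
    FillmoreFamily m (s.erase k) v μ where
  norm_eq_one i hi := hF.norm_eq_one i (mem_of_mem_erase hi)
  inner_eq_zero i hi j hj := hF.inner_eq_zero i (mem_of_mem_erase hi) j (mem_of_mem_erase hj)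
  nonneg i hi := hF.nonneg i (mem_of_mem_erase hi)
  sum_eq := by
    have := add_sum_erase s μ hk
    rw [hF.sum_eq, h1] at this
    push_cast at this
    linarith
  card_le := by
    have := hF.card_le
    rw [card_erase_of_mem hk]
    omega

lemma decrement (hF : FillmoreFamily (m + 1) s v μ) (hμ : ∀ i ∈ s, 1 < μ i) {k : κ} (hk : k ∈ s) :
    FillmoreFamily m s v (update μ k (μ k - 1)) where
  norm_eq_one := hF.norm_eq_one
  inner_eq_zero := hF.inner_eq_zero
  nonneg i hi := by
    rcases eq_or_ne i k with rfl | hik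
    · simpa using (hμ i hi).le
    · simpa [hik] using hF.nonneg i hi
  sum_eq := by
    have := add_sum_erase s μ hk
    rw [hF.sum_eq] at this
    rw [sum_update_eq_add_sum_erase hk]
    push_cast at this
    linarith
  card_le := by
    have h : (#s : ℝ) < m + 1 := by
      simpa [hF.sum_eq] using sum_lt_sum_of_nonempty ⟨k, hk⟩ hμ
    exact Nat.lt_succ_iff.mp (by exact_mod_cast h)

lemma mix (hF : FillmoreFamily (m + 1) s v μ) {k₁ k₂ : κ} (hk₁ : k₁ ∈ s) (hk₂ : k₂ ∈ s)
    (hne : k₂ ≠ k₁) (h₁ : 1 < μ k₁) {w : E} (hw : ‖w‖ = 1)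
    (hspan : ∃ p q : ℂ, w = p • v k₁ + q • v k₂) :
    FillmoreFamily m (s.erase k₁) (update v k₂ w) (update μ k₂ (μ k₁ + μ k₂ - 1)) := by
  have hk₂' : k₂ ∈ s.erase k₁ := mem_erase.2 ⟨hne, hk₂⟩
  have hw_perp : ∀ j ∈ s.erase k₁, j ≠ k₂ → ⟪w, v j⟫_ℂ = 0 := by
    intro j hj hj₂
    obtain ⟨p, q, rfl⟩ := hspan
    rw [inner_add_left, inner_smul_left, inner_smul_left,
      hF.inner_eq_zero k₁ hk₁ j (mem_of_mem_erase hj) (ne_of_mem_erase hj).symm,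
      hF.inner_eq_zero k₂ hk₂ j (mem_of_mem_erase hj) (Ne.symm hj₂), mul_zero, mul_zero, add_zero]
  constructor
  · intro i hi
    rcases eq_or_ne i k₂ with rfl | hi₂
    · rwa [update_self]
    · rw [update_of_ne hi₂]
      exact hF.norm_eq_one i (mem_of_mem_erase hi)
  · intro i hi j hj hij
    rcases eq_or_ne i k₂ with rfl | hi₂
    · rw [update_self, update_of_ne hij.symm]
      exact hw_perp j hj hij.symm
    rcases eq_or_ne j k₂ with rfl | hj₂
    · rw [update_self, update_of_ne hi₂]
      exact inner_eq_zero_symm.mp (hw_perp i hi hi₂)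
    rw [update_of_ne hi₂, update_of_ne hj₂]
    exact hF.inner_eq_zero i (mem_of_mem_erase hi) j (mem_of_mem_erase hj) hij
  · intro i hi
    rcases eq_or_ne i k₂ with rfl | hi₂
    · rw [update_self]
      linarith [hF.nonneg i hk₂]
    · rw [update_of_ne hi₂]
      exact hF.nonneg i (mem_of_mem_erase hi)
  · have h₁ := add_sum_erase s μ hk₁
    have h₂ := add_sum_erase (s.erase k₁) μ hk₂'
    rw [sum_update_eq_add_sum_erase hk₂']
    rw [hF.sum_eq] at h₁
    push_cast at h₁
    linarith
  · have := hF.card_le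
    rw [card_erase_of_mem hk₁]
    omega

theorem exists_eq_rankOne_add_diagonalOp (hF : FillmoreFamily (m + 1) s v μ) :
    ∃ x : E, ‖x‖ = 1 ∧ ∃ (s' : Finset κ) (v' : κ → E) (μ' : κ → ℝ),
      FillmoreFamily m s' v' μ' ∧ diagonalOp s v μ = rankOne ℂ x x + diagonalOp s' v' μ' := by
  by_cases hbig : ∃ k₁ ∈ s, 1 < μ k₁
  · obtain ⟨k₁, hk₁, h₁⟩ := hbig
    by_cases hsmall : ∃ k₂ ∈ s, k₂ ≠ k₁ ∧ μ k₂ ≤ 1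
    · obtain ⟨k₂, hk₂, hne, h₂⟩ := hsmall
      obtain ⟨x, w, hx, hw, hspan, hxw⟩ := exists_smul_rankOne_add_smul_rankOne_eq
        (hF.norm_eq_one k₁ hk₁) (hF.norm_eq_one k₂ hk₂) (hF.inner_eq_zero k₁ hk₁ k₂ hk₂ hne.symm)
        h₁ (hF.nonneg k₂ hk₂) h₂
      refine ⟨x, hx, _, _, _, hF.mix hk₁ hk₂ hne h₁ hw hspan, ?_⟩
      have hk₂' : k₂ ∈ s.erase k₁ := mem_erase.2 ⟨hne, hk₂⟩
      rw [diagonalOp_update hk₂', diagonalOp_eq_add_erase hk₁, diagonalOp_eq_add_erase hk₂',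
        ← add_assoc, hxw, add_assoc]
    · push Not at hsmall
      have hall : ∀ i ∈ s, 1 < μ i := fun i hi =>
        (eq_or_ne i k₁).elim (fun h => h ▸ h₁) (hsmall i hi)
      refine ⟨v k₁, hF.norm_eq_one k₁ hk₁, s, v, _, hF.decrement hall hk₁, ?_⟩
      have h := diagonalOp_update (v := v) (μ := μ) hk₁ (v k₁) (μ k₁ - 1)
      rw [update_eq_self] at h
      rw [h, diagonalOp_eq_add_erase hk₁, Complex.ofReal_sub, Complex.ofReal_one, sub_smul,
        one_smul, ← add_assoc, add_sub_cancel]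
  · push Not at hbig
    obtain ⟨k, hk, h1⟩ := hF.exists_eq_one hbig
    refine ⟨v k, hF.norm_eq_one k hk, _, _, _, hF.erase hk h1, ?_⟩
    rw [diagonalOp_eq_add_erase hk, h1, Complex.ofReal_one, one_smul]

theorem exists_eq_sum_rankOne (hF : FillmoreFamily m s v μ) :
    ∃ x : Fin m → E, (∀ j, ‖x j‖ = 1) ∧ diagonalOp s v μ = ∑ j, rankOne ℂ (x j) (x j) := by
  induction m generalizing s v μ with
  | zero =>
    refine ⟨Fin.elim0, fun j => j.elim0, ?_⟩
    rw [card_eq_zero.mp (Nat.le_zero.mp hF.card_le)]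
    simp [diagonalOp]
  | succ m ih =>
    obtain ⟨x₀, hx₀, s', v', μ', hF', heq⟩ := hF.exists_eq_rankOne_add_diagonalOp
    obtain ⟨x, hx, heq'⟩ := ih hF'
    exact ⟨Fin.cons x₀ x, Fin.cases hx₀ hx, by rw [heq, heq', Fin.sum_univ_succ]; simp⟩

end FillmoreFamily

theorem exists_eq_sum_rankOne_of_orthonormal {r m : ℕ} {v : Fin r → E} (hv : Orthonormal ℂ v)
    {μ : Fin r → ℝ} (hμ : ∀ k, 0 ≤ μ k) (hsum : ∑ k, μ k = m) (hr : r ≤ m) :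
    ∃ x : Fin m → E, (∀ j, ‖x j‖ = 1) ∧
      ∑ k, (μ k : ℂ) • rankOne ℂ (v k) (v k) = ∑ j, rankOne ℂ (x j) (x j) :=
  FillmoreFamily.exists_eq_sum_rankOne (s := univ)
    ⟨fun k _ => hv.1 k, fun _ _ _ _ h => hv.2 h, fun k _ => hμ k, hsum, by simpa using hr⟩

end Peeling

/-- **Fillmore's theorem.** A positive finite-rank operator is a finite sum of projections
iff its trace is at least its rank and the trace is a (nonnegative) integer. -/
theorem stmt0 {ι : Type*} (b : HilbertBasis ι ℂ H) (a : H →L[ℂ] H)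
    (ha : a.IsPositive) (hfin : FiniteDimensional ℂ (LinearMap.range (a : H →ₗ[ℂ] H))) :
    (∃ (n : ℕ) (p : Fin n → H →L[ℂ] H), (∀ j, IsProjOp (p j)) ∧ a = ∑ j, p j) ↔
      (Module.finrank ℂ (LinearMap.range (a : H →ₗ[ℂ] H)) : ℝ) ≤ traceAlong b a ∧
        ∃ m : ℕ, traceAlong b a = m := by
  simp only [isProjOp_iff_isStarProjection]
  constructor
  · rintro ⟨n, p, hp, hap⟩
    obtain ⟨N, htr, hrank⟩ := exists_traceAlong_eq_of_eq_sum_isStarProjection b hp hap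
    exact ⟨htr ▸ Nat.cast_le.mpr hrank, N, htr⟩
  · rintro ⟨hrank, m, htr⟩
    obtain ⟨v, μ, hv, hμ, hav⟩ := ha.exists_orthonormal_eq_sum_smul_rankOne
    have hsum : ∑ k, μ k = m := by
      rw [← traceAlong_sum_smul_rankOne b _ μ v fun k _ => hv.1 k, ← hav, htr]
    obtain ⟨x, hx, hax⟩ :=
      exists_eq_sum_rankOne_of_orthonormal hv hμ hsum (by exact_mod_cast htr ▸ hrank)
    exact ⟨m, fun j => rankOne ℂ (x j) (x j), fun j => isStarProjection_rankOne_self (hx j),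
      hav.trans hax⟩
end

section
/- Let 𝒜 be an infinite-dimensional abelian von Neumann algebra. Then there exists a positive invertible element a ∈ 𝒜 with I ≤ a ≤ 2I that is not a finite linear combination of projections in 𝒜. -/
open scoped InnerProductSpace
open ContinuousLinearMap

variable {H : Type*} [NormedAddCommGroup H] [InnerProductSpace ℂ H] [CompleteSpace H]

/-!
A finite linear combination of commuting projections is annihilated by a polynomial, so its
spectrum is finite. It therefore suffices to find a self-adjoint `b ∈ 𝒜` with infinite spectrum:
then `a = 3/2 + arctan(b)/π` lies between `1` and `2` and still has infinite spectrum.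
If every self-adjoint element of `𝒜` had finite spectrum, the spectral decomposition would put
`𝒜` inside the span of its projections, so `𝒜` would have infinitely many projections. Since they
commute, repeatedly splitting a projection with infinitely many subprojections gives a strictly
decreasing sequence `qₙ`, whose differences `eₙ = qₙ - qₙ₊₁` are orthogonal nonzero projections;
then `∑ 2⁻ⁿ eₙ` has every `2⁻ⁿ` as an eigenvalue, a contradiction.
-/

open Polynomial in
theorem IsIdempotentElem.isIntegral {R A : Type*} [CommRing R] [Ring A] [Algebra R A] {p : A}
    (hp : IsIdempotentElem p) : IsIntegral R p :=
  ⟨X ^ 2 - X, monic_X_pow_sub (degree_X_le.trans_lt (by norm_num)), by simp [sq, hp.eq]⟩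

open scoped IsMulCommutative in
theorem isIntegral_sum_of_commute {R A ι : Type*} [CommRing R] [Ring A] [Algebra R A]
    (s : Finset ι) (a : ι → A) (hint : ∀ i ∈ s, IsIntegral R (a i))
    (hcomm : ∀ i ∈ s, ∀ j ∈ s, Commute (a i) (a j)) : IsIntegral R (∑ i ∈ s, a i) := by
  let C := Algebra.adjoin R (a '' s)
  have : IsMulCommutative C := Algebra.isMulCommutative_adjoin R (by
    rintro _ ⟨i, hi, rfl⟩ _ ⟨j, hj, rfl⟩; exact hcomm i hi j hj)
  have hmem (i : ι) (hi : i ∈ s) : a i ∈ C := Algebra.subset_adjoin ⟨i, hi, rfl⟩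
  have : IsIntegral R (∑ i ∈ s.attach, (⟨a i, hmem i i.2⟩ : C)) :=
    IsIntegral.sum _ fun i _ =>
      (isIntegral_algHom_iff C.val Subtype.val_injective).mp (hint i i.2)
  simpa [Finset.sum_attach s a] using this.map C.val

theorem spectrum_finite_of_isIntegral {𝕜 A : Type*} [Field 𝕜] [Ring A] [Algebra 𝕜 A] {a : A}
    (ha : IsIntegral 𝕜 a) : (spectrum 𝕜 a).Finite := by
  nontriviality A
  refine (Polynomial.finite_setOfPred_isRoot (minpoly.ne_zero ha)).subset fun μ hμ => ?_
  have := spectrum.subset_polynomial_aeval a (minpoly 𝕜 a) ⟨μ, hμ, rfl⟩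
  simpa [minpoly.aeval, spectrum.zero_eq] using this

theorem spectrum_finite_sum_smul_of_commute {𝕜 A ι : Type*} [Field 𝕜] [Ring A] [Algebra 𝕜 A]
    (s : Finset ι) (c : ι → 𝕜) (p : ι → A) (hp : ∀ i ∈ s, IsIdempotentElem (p i))
    (hcomm : ∀ i ∈ s, ∀ j ∈ s, Commute (p i) (p j)) :
    (spectrum 𝕜 (∑ i ∈ s, c i • p i)).Finite :=
  spectrum_finite_of_isIntegral <| isIntegral_sum_of_commute s _
    (fun i hi => (hp i hi).isIntegral.smul (c i))
    fun i hi j hj => ((hcomm i hi j hj).smul_left _).smul_right _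

theorem mem_spectrum_of_mul_eq_smul {R A : Type*} [CommRing R] [Ring A] [Algebra R A]
    {a x : A} {μ : R} (hx : x ≠ 0) (h : a * x = μ • x) : μ ∈ spectrum R a := by
  refine fun hu => hx (hu.mul_right_eq_zero.mp ?_)
  rw [sub_mul, h, Algebra.smul_def, sub_self]

section CStarAlgebra

variable {A : Type*} [CStarAlgebra A]

def starProjections (S : StarSubalgebra ℂ A) : Set A := {p | p ∈ S ∧ IsStarProjection p}

theorem mem_span_starProjections_of_spectrum_finite {S : StarSubalgebra ℂ A}
    (hS : IsClosed (S : Set A)) {b : A} (hbS : b ∈ S) (hb : IsSelfAdjoint b)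
    (hfin : (spectrum ℝ b).Finite) : b ∈ Submodule.span ℂ (starProjections S) := by
  classical
  have hcont (g : ℝ → ℝ) : ContinuousOn g (spectrum ℝ b) := hfin.continuousOn g
  set χ : ℝ → ℝ → ℝ := fun t x => if x = t then 1 else 0
  have hχ (t : ℝ) : cfc (χ t) b ∈ starProjections S := by
    refine ⟨cfc_mem (hs := hS) _ hbS, ⟨?_, cfc_predicate _ b⟩⟩
    rw [IsIdempotentElem, ← cfc_mul _ _ b (hcont _) (hcont _)]
    exact cfc_congr fun x _ => by by_cases hx : x = t <;> simp [χ, hx]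
  have hdecomp : b = ∑ t ∈ hfin.toFinset, t • cfc (χ t) b :=
    calc b = cfc (∑ t ∈ hfin.toFinset, fun x => t * χ t x) b := by
          refine (cfc_id' ℝ b).symm.trans (cfc_congr fun x hx => ?_)
          simp [χ, Finset.sum_apply, hfin.mem_toFinset.mpr hx]
      _ = ∑ t ∈ hfin.toFinset, t • cfc (χ t) b := by
          rw [cfc_sum _ _ _ fun t _ => hcont _]
          exact Finset.sum_congr rfl fun t _ => cfc_const_mul t (χ t) b (hcont _)
  rw [hdecomp]
  refine Submodule.sum_mem _ fun t _ => ?_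
  rw [← algebraMap_smul ℂ t]
  exact Submodule.smul_mem _ _ (Submodule.subset_span (hχ t))

open scoped ComplexStarModule in
theorem toSubmodule_le_span_starProjections {S : StarSubalgebra ℂ A}
    (hS : IsClosed (S : Set A))
    (hfin : ∀ b ∈ S, IsSelfAdjoint b → (spectrum ℝ b).Finite) :
    Subalgebra.toSubmodule S.toSubalgebra ≤ Submodule.span ℂ (starProjections S) := by
  intro x hx
  have hre : (ℜ x : A) ∈ S := by
    rw [realPart_apply_coe]
    exact S.smul_mem (add_mem hx (star_mem hx)) _
  have him : (ℑ x : A) ∈ S := by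
    rw [imaginaryPart_apply_coe]
    exact S.smul_mem (S.smul_mem (sub_mem hx (star_mem hx)) _) _
  have hspan (b : selfAdjoint A) (hb : (b : A) ∈ S) :
      (b : A) ∈ Submodule.span ℂ (starProjections S) :=
    mem_span_starProjections_of_spectrum_finite hS hb b.2 (hfin _ hb b.2)
  rw [← realPart_add_I_smul_imaginaryPart x]
  exact add_mem (hspan _ hre) (Submodule.smul_mem _ _ (hspan _ him))

theorem exists_spectrum_infinite_of_orthogonal {S : StarSubalgebra ℂ A}
    (hS : IsClosed (S : Set A)) {e : ℕ → A} (he : ∀ n, e n ∈ starProjections S)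
    (he0 : ∀ n, e n ≠ 0) (horth : ∀ m n, m ≠ n → e m * e n = 0) :
    ∃ b ∈ S, IsSelfAdjoint b ∧ (spectrum ℝ b).Infinite := by
  have hsum : Summable fun n => (2⁻¹ : ℝ) ^ n • e n := by
    refine .of_norm_bounded summable_geometric_two fun n => ?_
    rw [norm_smul, Real.norm_of_nonneg (by positivity), one_div, inv_pow]
    exact mul_le_of_le_one_right (by positivity) ((he n).2.norm_le (e n))
  set b := ∑' n, (2⁻¹ : ℝ) ^ n • e n
  have hb : b ∈ S ∧ IsSelfAdjoint b := by
    have hclosed : IsClosed ((S : Set A) ∩ {x | IsSelfAdjoint x}) :=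
      hS.inter (isClosed_eq continuous_star continuous_id)
    refine hclosed.mem_of_tendsto hsum.hasSum (.of_forall fun s => ⟨?_, ?_⟩)
    · exact sum_mem fun n _ => S.smul_mem (he n).1 _
    · exact isSelfAdjoint_sum _ fun n _ => .smul (.all _) (he n).2.isSelfAdjoint
  have hbe (n : ℕ) : b * e n = (2⁻¹ : ℝ) ^ n • e n := by
    rw [← hsum.tsum_mul_right, tsum_eq_single n fun m hm => by
      rw [smul_mul_assoc, horth m n hm, smul_zero], smul_mul_assoc, (he n).2.isIdempotentElem.eq]
  exact ⟨b, hb.1, hb.2, Set.infinite_of_injective_forall_mem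
    (pow_right_strictAnti₀ (by norm_num) (by norm_num)).injective
    fun n => mem_spectrum_of_mul_eq_smul (he0 n) (hbe n)⟩

variable [PartialOrder A] [StarOrderedRing A]

theorem exists_one_le_le_two_spectrum_infinite {S : StarSubalgebra ℂ A}
    (hS : IsClosed (S : Set A)) {b : A} (hbS : b ∈ S) (hb : IsSelfAdjoint b)
    (hspec : (spectrum ℝ b).Infinite) :
    ∃ a ∈ S, 1 ≤ a ∧ a ≤ 2 ∧ (spectrum ℂ a).Infinite := by
  set f : ℝ → ℝ := fun t => 3 / 2 + Real.arctan t / Real.pi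
  have hf_mono : StrictMono f := fun s t hst => by
    have := Real.arctan_strictMono hst
    simp only [f]; gcongr
  have hf_mem (t : ℝ) : f t ∈ Set.Icc (1 : ℝ) 2 := by
    have h₁ := Real.neg_pi_div_two_lt_arctan t
    have h₂ := Real.arctan_lt_pi_div_two t
    have hπ := Real.pi_pos
    constructor
    · have : -(1 / 2 : ℝ) ≤ Real.arctan t / Real.pi := by rw [le_div_iff₀ hπ]; linarith
      simp only [f]; linarith
    · have : Real.arctan t / Real.pi ≤ 1 / 2 := by rw [div_le_iff₀ hπ]; linarith
      simp only [f]; linarith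
  refine ⟨cfc f b, cfc_mem (hs := hS) f hbS, ?_, ?_, ?_⟩
  · rw [← cfc_const_one ℝ b]
    exact cfc_mono fun t _ => (hf_mem t).1
  · rw [← map_ofNat (algebraMap ℝ A) 2, ← cfc_const (2 : ℝ) b]
    exact cfc_mono fun t _ => (hf_mem t).2
  · rw [← (cfc_predicate f b).spectrumRestricts.algebraMap_image, cfc_map_spectrum f b]
    exact (hspec.image hf_mono.injective.injOn).image (algebraMap ℝ ℂ).injective.injOn

theorem mul_mem_starProjections_inter_Iic {S : StarSubalgebra ℂ A}
    (hcomm : ∀ x ∈ S, ∀ y ∈ S, x * y = y * x) {x y : A} (hx : x ∈ starProjections S)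
    (hy : y ∈ starProjections S) : x * y ∈ starProjections S ∩ Set.Iic y := by
  have hxy : IsStarProjection (x * y) := hx.2.mul hy.2 (hcomm x hx.1 y hy.1)
  refine ⟨⟨mul_mem hx.1 hy.1, hxy⟩, ?_⟩
  rw [Set.mem_Iic, hxy.le_iff_mul_eq_left hy.2, mul_assoc, hy.2.isIdempotentElem.eq]

theorem exists_lt_starProjections_inter_Iic_infinite {S : StarSubalgebra ℂ A}
    (hcomm : ∀ x ∈ S, ∀ y ∈ S, x * y = y * x) {q : A} (hq : q ∈ starProjections S)
    (hinf : (starProjections S ∩ Set.Iic q).Infinite) :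
    ∃ q' ∈ starProjections S, q' < q ∧ (starProjections S ∩ Set.Iic q').Infinite := by
  obtain ⟨p, ⟨hpP, hpq⟩, hp⟩ := (hinf.sdiff (Set.toFinite {0, q})).nonempty
  simp only [Set.mem_insert_iff, Set.mem_singleton_iff, not_or] at hp
  have hrP : q - p ∈ starProjections S :=
    ⟨sub_mem hq.1 hpP.1, (hpP.2.le_iff_sub hq.2).mp hpq⟩
  -- `x ↦ (x * p, x * (q - p))` is injective on the projections below `q = p + (q - p)`
  have hsplit : (starProjections S ∩ Set.Iic p).Infinite ∨
      (starProjections S ∩ Set.Iic (q - p)).Infinite := by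
    by_contra! hfin
    obtain ⟨h₁, h₂⟩ := hfin
    refine hinf ((h₁.prod h₂).of_injOn (f := fun x => (x * p, x * (q - p)))
      (fun x hx => Set.mk_mem_prod (mul_mem_starProjections_inter_Iic hcomm hx.1 hpP)
        (mul_mem_starProjections_inter_Iic hcomm hx.1 hrP)) fun x hx y hy hxy => ?_)
    have hxq : x * q = x := (hx.1.2.le_iff_mul_eq_left hq.2).mp hx.2
    have hyq : y * q = y := (hy.1.2.le_iff_mul_eq_left hq.2).mp hy.2
    simp only [Prod.mk.injEq] at hxy
    rw [← hxq, ← hyq, ← sub_add_cancel q p, mul_add, mul_add, hxy.1, hxy.2]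
  rcases hsplit with h | h
  · exact ⟨p, hpP, lt_of_le_of_ne hpq hp.2, h⟩
  · exact ⟨q - p, hrP, lt_of_le_of_ne (sub_le_self _ hpP.2.nonneg) (by simpa using hp.1), h⟩

theorem exists_strictAnti_starProjections {S : StarSubalgebra ℂ A}
    (hcomm : ∀ x ∈ S, ∀ y ∈ S, x * y = y * x) (hinf : (starProjections S).Infinite) :
    ∃ q : ℕ → A, (∀ n, q n ∈ starProjections S) ∧ StrictAnti q := by
  let T := {q | q ∈ starProjections S ∧ (starProjections S ∩ Set.Iic q).Infinite}
  have hstep (q : T) : ∃ q' : T, (q' : A) < q := by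
    obtain ⟨q', hq'P, hq'q, hq'⟩ := exists_lt_starProjections_inter_Iic_infinite hcomm q.2.1 q.2.2
    exact ⟨⟨q', hq'P, hq'⟩, hq'q⟩
  choose next hnext using hstep
  have hone : (1 : A) ∈ T := by
    refine ⟨⟨one_mem S, .one A⟩, ?_⟩
    rwa [Set.inter_eq_left.mpr fun p hp => hp.2.le_one]
  refine ⟨fun n => (next^[n] ⟨1, hone⟩ : T), fun n => (next^[n] _).2.1,
    strictAnti_nat_of_succ_lt fun n => ?_⟩
  simpa only [Function.iterate_succ_apply'] using hnext _

theorem sub_succ_mul_sub_succ_eq_zero_of_antitone {q : ℕ → A}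
    (hq : ∀ n, IsStarProjection (q n)) (hanti : Antitone q) {m n : ℕ} (hmn : m ≠ n) :
    (q m - q (m + 1)) * (q n - q (n + 1)) = 0 := by
  have he (k : ℕ) : IsStarProjection (q k - q (k + 1)) :=
    ((hq (k + 1)).le_iff_sub (hq k)).mp (hanti k.le_succ)
  have hle {k l : ℕ} (hkl : k < l) : q l - q (l + 1) ≤ q (k + 1) :=
    (sub_le_self _ (hq _).nonneg).trans (hanti hkl)
  rcases hmn.lt_or_gt with h | h
  · rw [sub_mul, ((he n).le_iff_mul_eq_right (hq m)).mp ((hle h).trans (hanti m.le_succ)),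
      ((he n).le_iff_mul_eq_right (hq _)).mp (hle h), sub_self]
  · rw [mul_sub, ((he m).le_iff_mul_eq_left (hq n)).mp ((hle h).trans (hanti n.le_succ)),
      ((he m).le_iff_mul_eq_left (hq _)).mp (hle h), sub_self]

theorem exists_spectrum_infinite_of_strictAnti {S : StarSubalgebra ℂ A}
    (hS : IsClosed (S : Set A)) {q : ℕ → A} (hq : ∀ n, q n ∈ starProjections S)
    (hanti : StrictAnti q) : ∃ b ∈ S, IsSelfAdjoint b ∧ (spectrum ℝ b).Infinite :=
  exists_spectrum_infinite_of_orthogonal hS (e := fun n => q n - q (n + 1))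
    (fun n => ⟨sub_mem (hq n).1 (hq _).1,
      ((hq (n + 1)).2.le_iff_sub (hq n).2).mp (hanti.antitone n.le_succ)⟩)
    (fun n => sub_ne_zero.mpr (hanti n.lt_succ_self).ne')
    fun _ _ => sub_succ_mul_sub_succ_eq_zero_of_antitone (fun n => (hq n).2) hanti.antitone

end CStarAlgebra

theorem VonNeumannAlgebra.isClosed (𝒜 : VonNeumannAlgebra H) :
    IsClosed (𝒜 : Set (H →L[ℂ] H)) :=
  𝒜.centralizer_centralizer ▸ Set.isClosed_centralizer _

/-- In an infinite-dimensional abelian von Neumann algebra there is a positive invertible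
element with `I ≤ a ≤ 2I` that is not a finite linear combination of projections. -/
theorem stmt1 (𝒜 : VonNeumannAlgebra H)
    (habel : ∀ x ∈ 𝒜, ∀ y ∈ 𝒜, x * y = y * x)
    (hinf : ¬ FiniteDimensional ℂ
      (Subalgebra.toSubmodule 𝒜.toStarSubalgebra.toSubalgebra)) :
    ∃ a ∈ 𝒜, (1 : H →L[ℂ] H) ≤ a ∧ a ≤ 2 ∧ IsUnit a ∧
      ¬ ∃ (n : ℕ) (lam : Fin n → ℂ) (p : Fin n → H →L[ℂ] H),
          (∀ j, p j ∈ 𝒜 ∧ IsProjOp (p j)) ∧ a = ∑ j, lam j • p j := by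
  have hclosed : IsClosed (𝒜.toStarSubalgebra : Set (H →L[ℂ] H)) := 𝒜.isClosed
  obtain ⟨b, hb𝒜, hb, hspec⟩ :
      ∃ b ∈ 𝒜.toStarSubalgebra, IsSelfAdjoint b ∧ (spectrum ℝ b).Infinite := by
    by_contra! hfin
    have hproj : (starProjections 𝒜.toStarSubalgebra).Infinite := fun hproj =>
      have := FiniteDimensional.span_of_finite ℂ hproj
      hinf (Submodule.finiteDimensional_of_le (toSubmodule_le_span_starProjections hclosed hfin))
    obtain ⟨q, hq, hanti⟩ := exists_strictAnti_starProjections habel hproj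
    obtain ⟨b, hb𝒜, hb, hspec⟩ := exists_spectrum_infinite_of_strictAnti hclosed hq hanti
    exact hspec (hfin b hb𝒜 hb)
  obtain ⟨a, ha𝒜, h1a, ha2, hspec_a⟩ :=
    exists_one_le_le_two_spectrum_infinite hclosed hb𝒜 hb hspec
  refine ⟨a, ha𝒜, h1a, ha2, CStarAlgebra.isUnit_of_le 1 h1a, ?_⟩
  rintro ⟨n, lam, p, hp, rfl⟩
  exact hspec_a <| spectrum_finite_sum_smul_of_commute _ lam p (fun j _ => (hp j).2.2)
    fun i _ j _ => habel _ (hp i).1 _ (hp j).1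
end

section
/- Let a ∈ B(H) be positive and suppose a ≥ λ p for a projection p and a scalar λ > 0. Then the spectral projection χ_a(0, λ) satisfies χ_a(0, λ) ∧ p = 0; consequently χ_a(0,λ) is Murray–von Neumann subequivalent to R_a − p, and p is subequivalent to χ_a[λ, ∞). -/
/-
Polar decomposition `b = v |b|` yields a partial isometry `v` with `v* v = R_{b*}` and
`v v* ≤ R_b`. For projections `q`, `r` with `ran q ∩ ker r = 0`, the operator `b = r q` has
`ker b = ker q`, so `R_{b*} = q`, while `R_b ≤ r`; hence `q ≼ r`.
From `a ≥ λ p` we get `λ ‖p x‖² ≤ ⟪x, a x⟫`, so `ker a ⊆ ker p`, i.e. `p ≤ R_a`, and a nonzero `x`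
in `ran e ∩ ran p` would give `λ ‖x‖² ≤ ⟪x, a x⟫ < λ ‖x‖²`. Since also `e ≤ e + f = R_a`, this
makes `ran e ∩ ker (R_a - p)` and `ran p ∩ ker f` trivial.
-/

open scoped InnerProductSpace
open ContinuousLinearMap

variable {H : Type*} [NormedAddCommGroup H] [InnerProductSpace ℂ H] [CompleteSpace H]

lemma IsProjOp.isStarProjection {p : H →L[ℂ] H} (hp : IsProjOp p) : IsStarProjection p :=
  ⟨hp.2, hp.1⟩

lemma rangeProjection_eq_starProjection (b : H →L[ℂ] H) :
    rangeProjection b = b.range.topologicalClosure.starProjection :=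
  rfl

namespace IsStarProjection

variable {p q : H →L[ℂ] H}

lemma mem_range_iff (hp : IsStarProjection p) {x : H} : x ∈ p.range ↔ p x = x :=
  LinearMap.IsIdempotentElem.mem_range_iff hp.isIdempotentElem.toLinearMap

lemma apply_eq_self_of_le (hp : IsStarProjection p) (hq : IsStarProjection q) (hpq : p ≤ q)
    {x : H} (hx : p x = x) : q x = x := by
  rw [← hx, ← mul_apply_eq_comp, (hp.le_iff_mul_eq_right hq).1 hpq]

lemma orthogonal_ker_eq_range (hp : IsStarProjection p) : p.kerᗮ = p.range := by
  have := hp.isIdempotentElem.hasOrthogonalProjection_range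
  rw [← Submodule.orthogonal_orthogonal p.range, orthogonal_range, hp.isSelfAdjoint.adjoint_eq]

end IsStarProjection

lemma rangeProjection_le_of_mul_eq {b r : H →L[ℂ] H} (hr : IsStarProjection r)
    (h : r * b = b) : rangeProjection b ≤ r := by
  obtain ⟨_, hr_eq⟩ := isStarProjection_iff_eq_starProjection_range.1 hr
  conv_rhs => rw [hr_eq]
  refine Submodule.starProjection_le_starProjection_iff.2
    (Submodule.topologicalClosure_minimal _ ?_ hr.isIdempotentElem.isClosed_range)
  rintro _ ⟨x, rfl⟩
  exact hr.mem_range_iff.2 congr($h x)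

lemma rangeProjection_adjoint_mul_eq {q r : H →L[ℂ] H} (hq : IsStarProjection q)
    (h : Disjoint q.range r.ker) : rangeProjection (adjoint (r * q)) = q := by
  have hker : (r * q).ker = q.ker := by
    ext x
    refine ⟨fun hx => Submodule.disjoint_def.1 h _ (LinearMap.mem_range_self _ x) hx, fun hx => ?_⟩
    simp_all
  refine (IsStarProjection.ext_iff isStarProjection_starProjection hq).2 ?_
  rw [Submodule.range_starProjection, ← orthogonal_ker, hker, hq.orthogonal_ker_eq_range]

section PartialIsometry

variable {R : Type*} [NonUnitalNormedRing R] [StarRing R] [CStarRing R] {v : R}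

lemma mul_star_mul_self_eq_self (hv : IsStarProjection (star v * v)) :
    v * (star v * v) = v := by
  have hP : star v * v * (star v * v) = star v * v := hv.isIdempotentElem.eq
  rw [← sub_eq_zero, ← CStarRing.star_mul_self_eq_zero_iff]
  calc star (v * (star v * v) - v) * (v * (star v * v) - v)
      = star v * v * (star v * v) * (star v * v) - star v * v * (star v * v)
          - star v * v * (star v * v) + star v * v := by
        simp only [star_sub, star_mul, star_star]; noncomm_ring
    _ = 0 := by rw [hP, hP]; abel

lemma isStarProjection_mul_star (hv : IsStarProjection (star v * v)) :
    IsStarProjection (v * star v) where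
  isIdempotentElem := by
    rw [IsIdempotentElem, ← mul_assoc, mul_assoc v, mul_star_mul_self_eq_self hv]
  isSelfAdjoint := .mul_star_self v

end PartialIsometry

lemma norm_abs_apply (b : H →L[ℂ] H) (x : H) : ‖CFC.abs b x‖ = ‖b x‖ := by
  have hm : adjoint (CFC.abs b) ∘L CFC.abs b = adjoint b ∘L b := by
    rw [← star_eq_adjoint, (CFC.abs_nonneg b).isSelfAdjoint.star_eq, ← mul_def, CFC.abs_mul_abs,
      star_eq_adjoint, mul_def]
  rw [← sq_eq_sq₀ (norm_nonneg _) (norm_nonneg _), apply_norm_sq_eq_inner_adjoint_right, hm,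
    ← apply_norm_sq_eq_inner_adjoint_right]

lemma rangeProjection_abs (b : H →L[ℂ] H) :
    rangeProjection (CFC.abs b) = rangeProjection (adjoint b) := by
  have hker : (CFC.abs b).ker = b.ker := by
    ext x
    simp only [LinearMap.mem_ker, coe_coe, ← norm_eq_zero (a := CFC.abs b x), norm_abs_apply,
      norm_eq_zero]
  have habs := orthogonal_ker (CFC.abs b)
  rw [(CFC.abs_nonneg b).isSelfAdjoint.adjoint_eq] at habs
  rw [rangeProjection_eq_starProjection, rangeProjection_eq_starProjection,
    Submodule.starProjection_inj, ← habs, hker, orthogonal_ker]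

theorem exists_adjoint_mul_self_eq_and_mul_abs_eq (b : H →L[ℂ] H) :
    ∃ v : H →L[ℂ] H, adjoint v * v = rangeProjection (CFC.abs b) ∧ v * CFC.abs b = b := by
  set m := CFC.abs b
  set S := m.range.topologicalClosure
  have hmS : ∀ x, m x ∈ S := fun x => m.range.le_topologicalClosure (LinearMap.mem_range_self _ x)
  set e : H →L[ℂ] S := m.codRestrict S hmS
  have he : DenseRange e := by
    rw [DenseRange, Subtype.dense_iff, ← Set.range_comp]
    exact (Submodule.topologicalClosure_coe _).le
  have hnorm : ∀ x, ‖e x‖ = ‖b x‖ := norm_abs_apply b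
  -- the isometry `|b| x ↦ b x` on the closure of the range of `|b|`
  set W : S →L[ℂ] H := (b : H →ₗ[ℂ] H).extendOfNorm (e : H →ₗ[ℂ] S)
  have hWe : ∀ x, W (e x) = b x := LinearMap.extendOfNorm_eq he ⟨1, fun x => by simp [hnorm]⟩
  have hW : adjoint W ∘L W = 1 := by
    refine (norm_map_iff_adjoint_comp_self W).1 fun z => he.induction_on z
      (isClosed_eq (by fun_prop) continuous_norm) fun x => ?_
    rw [hWe, hnorm]
  refine ⟨W ∘L S.orthogonalProjectionOnto, ?_, ?_⟩
  · rw [mul_def, adjoint_comp, Submodule.adjoint_orthogonalProjectionOnto, comp_assoc,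
      ← comp_assoc _ W, hW]
    rfl
  · ext x
    change W (S.orthogonalProjectionOnto (e x)) = b x
    rw [S.orthogonalProjectionOnto_mem_subspace_eq_self, hWe]

theorem mvNSubequiv_rangeProjection_adjoint (b : H →L[ℂ] H) :
    MvNSubequiv (rangeProjection (adjoint b)) (rangeProjection b) := by
  obtain ⟨v, hvv, hvb⟩ := exists_adjoint_mul_self_eq_and_mul_abs_eq b
  have hP : IsStarProjection (star v * v) := by
    rw [star_eq_adjoint, hvv]
    exact isStarProjection_starProjection
  have hrange : ∀ y, v y ∈ b.range.topologicalClosure := by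
    intro y
    have hvy : v y = v (rangeProjection (CFC.abs b) y) := by
      rw [← hvv, ← star_eq_adjoint, ← mul_apply_eq_comp, mul_star_mul_self_eq_self hP]
    have := Submodule.topologicalClosure_map v (CFC.abs b).range
      ⟨_, Submodule.starProjection_apply_mem _ y, rfl⟩
    rw [← LinearMap.range_comp, ← toLinearMap_comp, ← mul_def, hvb] at this
    exact hvy ▸ this
  refine ⟨v, hvv.trans (rangeProjection_abs b), ?_⟩
  rw [← star_eq_adjoint]
  refine (isStarProjection_mul_star hP).le_of_mul_eq_right isStarProjection_starProjection ?_
  ext y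
  exact Submodule.starProjection_eq_self_iff.2 (hrange _)

theorem mvNSubequiv_of_disjoint {q r : H →L[ℂ] H} (hq : IsStarProjection q)
    (hr : IsStarProjection r) (h : Disjoint q.range r.ker) : MvNSubequiv q r := by
  obtain ⟨v, hvv, hvr⟩ := mvNSubequiv_rangeProjection_adjoint (r * q)
  rw [rangeProjection_adjoint_mul_eq hq h] at hvv
  have hrb : r * (r * q) = r * q := by rw [← mul_assoc, hr.isIdempotentElem.eq]
  exact ⟨v, hvv, hvr.trans (rangeProjection_le_of_mul_eq hr hrb)⟩

lemma re_inner_apply_le_of_le {E : Type*} [NormedAddCommGroup E] [InnerProductSpace ℂ E]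
    {f g : E →L[ℂ] E} (h : f ≤ g) (x : E) : RCLike.re ⟪x, f x⟫_ℂ ≤ RCLike.re ⟪x, g x⟫_ℂ := by
  simpa [inner_sub_right] using ((le_def f g).1 h).re_inner_nonneg_right x

namespace IsStarProjection

variable {p a : H →L[ℂ] H} {lam : ℝ}

lemma smul_norm_sq_le (hp : IsStarProjection p) (hap : (lam : ℂ) • p ≤ a) (x : H) :
    lam * ‖p x‖ ^ 2 ≤ RCLike.re ⟪x, a x⟫_ℂ := by
  have hpp : adjoint p ∘L p = p := by
    rw [← mul_def, ← star_eq_adjoint, hp.isSelfAdjoint.star_eq, hp.isIdempotentElem.eq]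
  calc lam * ‖p x‖ ^ 2 = RCLike.re ⟪x, ((lam : ℂ) • p) x⟫_ℂ := by
        rw [apply_norm_sq_eq_inner_adjoint_right, hpp, smul_apply, inner_smul_right]
        exact (RCLike.re_ofReal_mul lam _).symm
    _ ≤ RCLike.re ⟪x, a x⟫_ℂ := re_inner_apply_le_of_le hap x

lemma ker_le_ker_of_smul_le (hp : IsStarProjection p) (hlam : 0 < lam)
    (hap : (lam : ℂ) • p ≤ a) : a.ker ≤ p.ker := by
  intro x (hx : a x = 0)
  have := hp.smul_norm_sq_le hap x
  rw [hx, inner_zero_right, map_zero] at this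
  have : ‖p x‖ ^ 2 ≤ 0 := nonpos_of_mul_nonpos_right this hlam
  simpa using this

lemma le_rangeProjection_of_smul_le (hp : IsStarProjection p) (ha : IsSelfAdjoint a)
    (hlam : 0 < lam) (hap : (lam : ℂ) • p ≤ a) : p ≤ rangeProjection a := by
  obtain ⟨_, hp_eq⟩ := isStarProjection_iff_eq_starProjection_range.1 hp
  conv_lhs => rw [hp_eq]
  have hK : a.range.topologicalClosure = a.kerᗮ := by rw [orthogonal_ker, ha.adjoint_eq]
  rw [rangeProjection_eq_starProjection, Submodule.starProjection_le_starProjection_iff, hK,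
    ← hp.orthogonal_ker_eq_range]
  exact Submodule.orthogonal_le (hp.ker_le_ker_of_smul_le hlam hap)

end IsStarProjection

-- `e` stands for `χ_a(0, λ)` and `f` for `χ_a[λ, ∞)`.
theorem stmt4_general (a : H →L[ℂ] H) (ha : a.IsPositive) (lam : ℝ) (hlam : 0 < lam)
    (p : H →L[ℂ] H) (hp : IsProjOp p) (hap : (lam : ℂ) • p ≤ a)
    (e f : H →L[ℂ] H) (he : IsProjOp e) (hf : IsProjOp f)
    (hef : e + f = rangeProjection a)
    (hestrict : ∀ x : H, e x = x → x ≠ 0 → RCLike.re ⟪x, a x⟫_ℂ < lam * ‖x‖ ^ 2) :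
    (∀ x : H, e x = x → p x = x → x = 0) ∧
      MvNSubequiv e (rangeProjection a - p) ∧ MvNSubequiv p f := by
  replace hp := hp.isStarProjection
  replace he := he.isStarProjection
  replace hf := hf.isStarProjection
  have hR : IsStarProjection (rangeProjection a) := isStarProjection_starProjection
  have hpR : p ≤ rangeProjection a := hp.le_rangeProjection_of_smul_le ha.isSelfAdjoint hlam hap
  have heR : e ≤ rangeProjection a := hef ▸ le_add_of_nonneg_right hf.nonneg
  have hep : ∀ x, e x = x → p x = x → x = 0 := fun x hex hpx => by
    by_contra hx
    have := hp.smul_norm_sq_le hap x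
    rw [hpx] at this
    exact (hestrict x hex hx).not_ge this
  refine ⟨hep, mvNSubequiv_of_disjoint he ((hp.le_iff_sub hR).1 hpR) ?_,
    mvNSubequiv_of_disjoint hp hf ?_⟩
  · refine Submodule.disjoint_def.2 fun x hex hx => ?_
    replace hex := he.mem_range_iff.1 hex
    have hRx := he.apply_eq_self_of_le hR heR hex
    rw [LinearMap.mem_ker, coe_coe, sub_apply, hRx, sub_eq_zero] at hx
    exact hep x hex hx.symm
  · refine Submodule.disjoint_def.2 fun x hpx (hfx : f x = 0) => ?_
    replace hpx := hp.mem_range_iff.1 hpx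
    have hRx := hp.apply_eq_self_of_le hR hpR hpx
    rw [← hef, add_apply, hfx, add_zero] at hRx
    exact hep x hRx hpx

/-- If `a ≥ λ p` then `χ_a(0, λ) ∧ p = 0`, `χ_a(0,λ) ≼ R_a − p` and `p ≼ χ_a[λ, ∞)`.
Here `e` plays the role of `χ_a(0,λ)` and `f` that of `χ_a[λ,∞)`, characterized by:
`e + f = R_a`, `f` commutes with `a`, `a ≥ λ` on the range of `f`, and `a < λ`
strictly on the range of `e`. -/
theorem stmt4 (a : H →L[ℂ] H) (ha : a.IsPositive) (lam : ℝ) (hlam : 0 < lam)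
    (p : H →L[ℂ] H) (hp : IsProjOp p) (hap : (lam : ℂ) • p ≤ a)
    (e f : H →L[ℂ] H) (he : IsProjOp e) (hf : IsProjOp f)
    (hef : e + f = rangeProjection a)
    (hcf : a * f = f * a)
    (hflam : (lam : ℂ) • f ≤ a * f)
    (hestrict : ∀ x : H, e x = x → x ≠ 0 → RCLike.re ⟪x, a x⟫_ℂ < lam * ‖x‖ ^ 2) :
    (∀ x : H, e x = x → p x = x → x = 0) ∧
      MvNSubequiv e (rangeProjection a - p) ∧ MvNSubequiv p f :=
  stmt4_general a ha lam hlam p hp hap e f he hf hef hestrict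
end

section
/- If k is a positive finite-rank operator on a Hilbert space with tr(k) a positive integer, then R_k + k is a finite sum of projections, and hence I + k is a finite sum of projections. -/
open scoped InnerProductSpace
open ContinuousLinearMap

variable {H : Type*} [NormedAddCommGroup H] [InnerProductSpace ℂ H] [CompleteSpace H]

/-!
Diagonalising `k` on its (finite-dimensional) range gives `R_k + k = ∑ᵢ (1 + μᵢ) Pᵢ` for
orthonormal eigenvectors `eᵢ` with rank-one projections `Pᵢ`; its trace `r + m` is an integer
at least its rank `r`. Fillmore's argument then peels off one rank-one projection at a time while
keeping "integer trace ≥ rank": an eigenvalue `1` is simply removed; an eigenvalue `a > 1` and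
an eigenvalue `b < 1` are rotated, within the plane of their eigenvectors, into a projection plus
a rank-one operator with eigenvalue `a + b - 1`; if all eigenvalues are `≥ 1`, some `a > 1` is split
as `1 + (a - 1)`. Finally `I + k = (I - R_k) + (R_k + k)`.
-/

open InnerProductSpace

section General

variable {𝕜 E : Type*} [RCLike 𝕜] [NormedAddCommGroup E] [InnerProductSpace 𝕜 E]

lemma rankOne_ofReal_smul_self (c : ℝ) (x : E) :
    rankOne 𝕜 ((c : 𝕜) • x) ((c : 𝕜) • x) = ((c ^ 2 : ℝ) : 𝕜) • rankOne 𝕜 x x := by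
  ext y
  simp [smul_smul, sq]

lemma rankOne_rotate_add (y z : E) {α β : ℝ} (h : α ^ 2 + β ^ 2 = 1) :
    rankOne 𝕜 ((α : 𝕜) • y + (β : 𝕜) • z) ((α : 𝕜) • y + (β : 𝕜) • z) +
      rankOne 𝕜 ((-β : 𝕜) • y + (α : 𝕜) • z) ((-β : 𝕜) • y + (α : 𝕜) • z) =
      rankOne 𝕜 y y + rankOne 𝕜 z z := by
  have h' : (α : 𝕜) ^ 2 + (β : 𝕜) ^ 2 = 1 := by exact_mod_cast h
  ext x
  simp only [add_apply, rankOne_apply, inner_add_left, inner_smul_left,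
    RCLike.conj_ofReal, map_neg, smul_add, smul_smul]
  match_scalars
  · linear_combination ⟪y, x⟫_𝕜 * h'
  · linear_combination ⟪z, x⟫_𝕜 * h'

lemma norm_ofReal_smul_add_sq {y z : E} (hyz : ⟪y, z⟫_𝕜 = 0) (α β : ℝ) :
    ‖(α : 𝕜) • y + (β : 𝕜) • z‖ ^ 2 = α ^ 2 * ‖y‖ ^ 2 + β ^ 2 * ‖z‖ ^ 2 := by
  rw [@norm_add_sq 𝕜, inner_smul_left, inner_smul_right, hyz, norm_smul, norm_smul]
  simp [mul_pow]

lemma exists_sq_add_sq_eq_one_and_eq_one {a b : ℝ} (hb : b < 1) (ha : 1 < a) :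
    ∃ α β : ℝ, α ^ 2 + β ^ 2 = 1 ∧ α ^ 2 * a + β ^ 2 * b = 1 := by
  have hab : 0 < a - b := by linarith
  refine ⟨√((1 - b) / (a - b)), √((a - 1) / (a - b)), ?_, ?_⟩ <;>
  · rw [Real.sq_sqrt (div_nonneg (by linarith) hab.le),
      Real.sq_sqrt (div_nonneg (by linarith) hab.le)]
    field_simp
    ring

lemma exists_rankOne_add_rankOne_eq {y z : E} (hyz : ⟪y, z⟫_𝕜 = 0) (hz : ‖z‖ < 1)
    (hy : 1 < ‖y‖) :
    ∃ u w : E, ‖u‖ = 1 ∧ ‖y‖ ^ 2 + ‖z‖ ^ 2 = 1 + ‖w‖ ^ 2 ∧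
      (∀ x, ⟪y, x⟫_𝕜 = 0 → ⟪z, x⟫_𝕜 = 0 → ⟪w, x⟫_𝕜 = 0) ∧
      rankOne 𝕜 y y + rankOne 𝕜 z z = rankOne 𝕜 u u + rankOne 𝕜 w w := by
  obtain ⟨α, β, hαβ, hu⟩ := exists_sq_add_sq_eq_one_and_eq_one
    (pow_lt_one₀ (norm_nonneg z) hz two_ne_zero) (one_lt_pow₀ hy two_ne_zero)
  refine ⟨(α : 𝕜) • y + (β : 𝕜) • z, (-β : 𝕜) • y + (α : 𝕜) • z, ?_, ?_, ?_,
    (rankOne_rotate_add y z hαβ).symm⟩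
  · rw [← pow_eq_one_iff_of_nonneg (norm_nonneg _) two_ne_zero, norm_ofReal_smul_add_sq hyz,
      ← hu]
  · have := norm_ofReal_smul_add_sq (𝕜 := 𝕜) hyz (-β) α
    push_cast at this
    rw [this]
    linear_combination hu - (‖y‖ ^ 2 + ‖z‖ ^ 2) * hαβ
  · intro x hyx hzx
    simp [inner_add_left, inner_smul_left, hyx, hzx]

lemma hasSum_re_inner_rankOne_self {ι : Type*} (b : HilbertBasis ι 𝕜 E) (x : E) :
    HasSum (fun j => RCLike.re ⟪b j, rankOne 𝕜 x x (b j)⟫_𝕜) (‖x‖ ^ 2) := by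
  have := (b.hasSum_inner_mul_inner x x).mapL RCLike.reCLM
  simpa only [RCLike.reCLM_apply, inner_self_eq_norm_sq, rankOne_apply, inner_smul_right]
    using this

lemma traceAlong_sum_smul_rankOne_s14 {F ι κ : Type*} [NormedAddCommGroup F] [InnerProductSpace ℂ F]
    [Fintype κ] (b : HilbertBasis ι ℂ F) (c : κ → ℝ) (e : κ → F) :
    traceAlong b (∑ i, (c i : ℂ) • rankOne ℂ (e i) (e i)) = ∑ i, c i * ‖e i‖ ^ 2 := by
  have h (j : ι) : RCLike.re ⟪b j, (∑ i, (c i : ℂ) • rankOne ℂ (e i) (e i)) (b j)⟫_ℂ =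
      ∑ i, c i * RCLike.re ⟪b j, rankOne ℂ (e i) (e i) (b j)⟫_ℂ := by
    simp only [sum_apply, smul_apply, inner_sum, inner_smul_right, map_sum,
      RCLike.re_to_complex, Complex.re_ofReal_mul]
  rw [traceAlong, tsum_congr h]
  exact (hasSum_sum fun i _ => (hasSum_re_inner_rankOne_self b (e i)).mul_left (c i)).tsum_eq

variable (𝕜) in
/-- The operator `∑ y ∈ S, rankOne 𝕜 y y` has the orthogonal vectors `y ∈ S` as eigenvectors with
eigenvalues `‖y‖ ^ 2`: its trace is the integer `n`, and `n` bounds its rank `#S`. -/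
structure IsFillmoreFamily (S : Finset E) (n : ℕ) : Prop where
  pairwise_inner : (S : Set E).Pairwise fun y z => ⟪y, z⟫_𝕜 = 0
  sum_norm_sq : ∑ y ∈ S, ‖y‖ ^ 2 = n
  card_le : S.card ≤ n

lemma notMem_of_forall_inner_eq_zero {T : Finset E} {w : E} (hw0 : w ≠ 0)
    (hw : ∀ x ∈ T, ⟪w, x⟫_𝕜 = 0) : w ∉ T :=
  fun hwT => hw0 (inner_self_eq_zero.mp (hw w hwT))

lemma isFillmoreFamily_insert [DecidableEq E] {T : Finset E} {w : E} {n : ℕ}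
    (hT : (T : Set E).Pairwise fun y z => ⟪y, z⟫_𝕜 = 0) (hw0 : w ≠ 0)
    (hw : ∀ x ∈ T, ⟪w, x⟫_𝕜 = 0) (hsum : ‖w‖ ^ 2 + ∑ y ∈ T, ‖y‖ ^ 2 = n)
    (hcard : T.card < n) :
    IsFillmoreFamily 𝕜 (insert w T) n where
  pairwise_inner := by
    rw [Finset.coe_insert]
    exact hT.insert fun x hx _ => ⟨hw x hx, inner_eq_zero_symm.mp (hw x hx)⟩
  sum_norm_sq := by rwa [Finset.sum_insert (notMem_of_forall_inner_eq_zero hw0 hw)]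
  card_le := (Finset.card_insert_le w T).trans hcard

namespace IsFillmoreFamily

variable {S : Finset E} {n : ℕ}

lemma exists_rankOne_add_of_lt_one_lt (h : IsFillmoreFamily 𝕜 S (n + 1)) {y z : E} (hyS : y ∈ S)
    (hzS : z ∈ S) (hz : ‖z‖ < 1) (hy : 1 < ‖y‖) :
    ∃ u T, ‖u‖ = 1 ∧ IsFillmoreFamily 𝕜 T n ∧
      ∑ x ∈ S, rankOne 𝕜 x x = rankOne 𝕜 u u + ∑ x ∈ T, rankOne 𝕜 x x := by
  classical
  have hyz : y ≠ z := by rintro rfl; linarith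
  obtain ⟨u, w, hu, hnorm, hw, hsplit⟩ :=
    exists_rankOne_add_rankOne_eq (h.pairwise_inner hyS hzS hyz) hz hy
  set T := (S.erase y).erase z
  have hzS' : z ∈ S.erase y := Finset.mem_erase.mpr ⟨hyz.symm, hzS⟩
  have hwT : ∀ x ∈ T, ⟪w, x⟫_𝕜 = 0 := fun x hx => by
    obtain ⟨hxz, hxy, hxS⟩ : x ≠ z ∧ x ≠ y ∧ x ∈ S := by simpa [T] using hx
    exact hw x (h.pairwise_inner hyS hxS hxy.symm) (h.pairwise_inner hzS hxS hxz.symm)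
  have hw0 : w ≠ 0 := by
    rintro rfl
    rw [norm_zero] at hnorm
    nlinarith [sq_nonneg ‖z‖]
  refine ⟨u, insert w T, hu, isFillmoreFamily_insert ?_ hw0 hwT ?_ ?_, ?_⟩
  · exact h.pairwise_inner.mono <| Finset.coe_subset.mpr <|
      (Finset.erase_subset _ _).trans (Finset.erase_subset _ _)
  · have := h.sum_norm_sq
    rw [← Finset.add_sum_erase _ _ hyS, ← Finset.add_sum_erase _ _ hzS'] at this
    push_cast at this
    linarith
  · have := h.card_le
    have : T.card < (S.erase y).card := Finset.card_erase_lt_of_mem hzS'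
    have := Finset.card_erase_lt_of_mem hyS
    omega
  · rw [← Finset.add_sum_erase _ _ hyS, ← Finset.add_sum_erase _ _ hzS', ← add_assoc, hsplit,
      Finset.sum_insert (notMem_of_forall_inner_eq_zero hw0 hwT), add_assoc]

lemma erase_of_norm_eq_one [DecidableEq E] (h : IsFillmoreFamily 𝕜 S (n + 1)) {y : E}
    (hyS : y ∈ S) (hy : ‖y‖ = 1) : IsFillmoreFamily 𝕜 (S.erase y) n where
  pairwise_inner := h.pairwise_inner.mono (Finset.coe_subset.mpr (Finset.erase_subset _ _))
  sum_norm_sq := by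
    have := h.sum_norm_sq
    rw [← Finset.add_sum_erase _ _ hyS, hy] at this
    push_cast at this
    linarith
  card_le := by
    have := h.card_le
    have := Finset.card_erase_of_mem hyS
    omega

lemma exists_rankOne_add_of_forall_one_le (h : IsFillmoreFamily 𝕜 S (n + 1)) {y : E}
    (hyS : y ∈ S) (hy : 1 < ‖y‖) (hS : ∀ z ∈ S, 1 ≤ ‖z‖) :
    ∃ u T, ‖u‖ = 1 ∧ IsFillmoreFamily 𝕜 T n ∧
      ∑ x ∈ S, rankOne 𝕜 x x = rankOne 𝕜 u u + ∑ x ∈ T, rankOne 𝕜 x x := by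
  classical
  -- with `z = 0` the rotation just splits `y` into a unit vector and a multiple of `y`
  obtain ⟨u, w, hu, hnorm, hw, hsplit⟩ :=
    exists_rankOne_add_rankOne_eq (𝕜 := 𝕜) (inner_zero_right y) (by simp) hy
  simp only [norm_zero, map_zero, add_zero] at hnorm hsplit
  have hwT : ∀ x ∈ S.erase y, ⟪w, x⟫_𝕜 = 0 := fun x hx =>
    hw x (h.pairwise_inner hyS (Finset.mem_of_mem_erase hx) (Finset.ne_of_mem_erase hx).symm)
      (inner_zero_left x)
  have hw0 : w ≠ 0 := by
    rintro rfl
    rw [norm_zero] at hnorm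
    nlinarith
  have hcard : (S.card : ℝ) < n + 1 := by
    rw [← Nat.cast_add_one, ← h.sum_norm_sq, Finset.card_eq_sum_ones, Nat.cast_sum]
    refine Finset.sum_lt_sum (fun z hz => ?_) ⟨y, hyS, ?_⟩
    · simpa using one_le_pow₀ (n := 2) (hS z hz)
    · simpa using one_lt_pow₀ hy two_ne_zero
  refine ⟨u, insert w (S.erase y), hu, isFillmoreFamily_insert ?_ hw0 hwT ?_ ?_, ?_⟩
  · exact h.pairwise_inner.mono (Finset.coe_subset.mpr (Finset.erase_subset _ _))
  · have := h.sum_norm_sq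
    rw [← Finset.add_sum_erase _ _ hyS] at this
    push_cast at this
    linarith
  · have := Finset.card_erase_lt_of_mem hyS
    have : S.card < n + 1 := by exact_mod_cast hcard
    omega
  · rw [← Finset.add_sum_erase _ _ hyS, hsplit,
      Finset.sum_insert (notMem_of_forall_inner_eq_zero hw0 hwT), add_assoc]

lemma exists_rankOne_add (h : IsFillmoreFamily 𝕜 S (n + 1)) :
    ∃ u T, ‖u‖ = 1 ∧ IsFillmoreFamily 𝕜 T n ∧
      ∑ x ∈ S, rankOne 𝕜 x x = rankOne 𝕜 u u + ∑ x ∈ T, rankOne 𝕜 x x := by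
  classical
  obtain ⟨y, hyS, hy⟩ : ∃ y ∈ S, 1 ≤ ‖y‖ := by
    by_contra! hlt
    have hne : S.Nonempty := Finset.nonempty_of_sum_ne_zero (by rw [h.sum_norm_sq]; positivity)
    have := Finset.sum_lt_sum_of_nonempty hne fun z hz =>
      pow_lt_one₀ (norm_nonneg z) (hlt z hz) (two_ne_zero (α := ℕ))
    rw [h.sum_norm_sq, Finset.sum_const, nsmul_one] at this
    have : n + 1 < S.card := by exact_mod_cast this
    exact absurd h.card_le this.not_ge
  rcases hy.eq_or_lt with hy | hy
  · exact ⟨y, S.erase y, hy.symm, h.erase_of_norm_eq_one hyS hy.symm,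
      (Finset.add_sum_erase _ _ hyS).symm⟩
  by_cases hz : ∃ z ∈ S, ‖z‖ < 1
  · obtain ⟨z, hzS, hz⟩ := hz
    exact h.exists_rankOne_add_of_lt_one_lt hyS hzS hz hy
  · push Not at hz
    exact h.exists_rankOne_add_of_forall_one_le hyS hy hz

end IsFillmoreFamily

end General

section ProjectionSums

variable {𝕜 E : Type*} [RCLike 𝕜] [NormedAddCommGroup E] [InnerProductSpace 𝕜 E]
  [CompleteSpace E]

variable (𝕜 E) in
def projectionSums : AddSubmonoid (E →L[𝕜] E) :=
  AddSubmonoid.closure {p | IsStarProjection p}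

lemma rankOne_self_mem_projectionSums {u : E} (hu : ‖u‖ = 1) :
    rankOne 𝕜 u u ∈ projectionSums 𝕜 E :=
  AddSubmonoid.subset_closure (isStarProjection_rankOne_self hu)

theorem IsFillmoreFamily.sum_rankOne_mem_projectionSums {S : Finset E} {n : ℕ}
    (h : IsFillmoreFamily 𝕜 S n) : ∑ y ∈ S, rankOne 𝕜 y y ∈ projectionSums 𝕜 E := by
  induction n generalizing S with
  | zero =>
    rw [Finset.card_eq_zero.mp (Nat.le_zero.mp h.card_le), Finset.sum_empty]
    exact zero_mem _
  | succ n ih =>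
    obtain ⟨u, T, hu, hT, hsum⟩ := h.exists_rankOne_add
    rw [hsum]
    exact add_mem (rankOne_self_mem_projectionSums hu) (ih hT)

theorem sum_rankOne_mem_projectionSums {ι : Type*} [Fintype ι] {y : ι → E}
    (horth : Pairwise fun i j => ⟪y i, y j⟫_𝕜 = 0) (hy : ∀ i, y i ≠ 0) {n : ℕ}
    (hsum : ∑ i, ‖y i‖ ^ 2 = n) (hcard : Fintype.card ι ≤ n) :
    ∑ i, rankOne 𝕜 (y i) (y i) ∈ projectionSums 𝕜 E := by
  classical
  have hinj : Function.Injective y := fun i j hij => by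
    by_contra hne
    have : ⟪y i, y j⟫_𝕜 = 0 := horth hne
    rw [hij] at this
    exact hy j (inner_self_eq_zero.mp this)
  have h : IsFillmoreFamily 𝕜 (Finset.univ.image y) n := by
    refine ⟨?_, by rwa [Finset.sum_image hinj.injOn],
      by rwa [Finset.card_image_of_injective _ hinj]⟩
    rw [Finset.coe_image, Finset.coe_univ, Set.image_univ]
    rintro _ ⟨i, rfl⟩ _ ⟨j, rfl⟩ hne
    exact horth fun hij => hne (congrArg y hij)
  simpa [Finset.sum_image hinj.injOn] using h.sum_rankOne_mem_projectionSums

theorem sum_smul_rankOne_mem_projectionSums {ι : Type*} [Fintype ι] {e : ι → E}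
    (he : Orthonormal 𝕜 e) {c : ι → ℝ} (hc : ∀ i, 0 < c i) {n : ℕ} (hsum : ∑ i, c i = n)
    (hcard : Fintype.card ι ≤ n) :
    ∑ i, (c i : 𝕜) • rankOne 𝕜 (e i) (e i) ∈ projectionSums 𝕜 E := by
  have hsq (i : ι) : √(c i) ^ 2 = c i := Real.sq_sqrt (hc i).le
  have hy (i : ι) : rankOne 𝕜 ((√(c i) : 𝕜) • e i) ((√(c i) : 𝕜) • e i) =
      (c i : 𝕜) • rankOne 𝕜 (e i) (e i) := by
    rw [rankOne_ofReal_smul_self, hsq]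
  simp_rw [← hy]
  refine sum_rankOne_mem_projectionSums (fun i j hij => ?_) (fun i => ?_) ?_ hcard
  · simp [inner_smul_left, inner_smul_right, he.2 hij]
  · exact smul_ne_zero (by simpa using (Real.sqrt_pos.mpr (hc i)).ne') (he.ne_zero i)
  · simpa [norm_smul, he.1, Real.sqrt_nonneg, abs_of_nonneg, mul_pow, hsq] using hsum

end ProjectionSums

lemma isStarProjection_rangeProjection (k : H →L[ℂ] H) : IsStarProjection (rangeProjection k) :=
  isStarProjection_starProjection

lemma mul_rangeProjection_of_isSelfAdjoint {k : H →L[ℂ] H} (hk : IsSelfAdjoint k) :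
    k * rangeProjection k = k := by
  have h : rangeProjection k * k = k := by
    ext x
    exact Submodule.starProjection_eq_self_iff.mpr
      (Submodule.le_topologicalClosure _ (LinearMap.mem_range_self _ x))
  simpa [star_mul, hk.star_eq, (isStarProjection_rangeProjection k).isSelfAdjoint.star_eq]
    using congrArg star h

theorem ContinuousLinearMap.IsPositive.exists_orthonormal_eq_sum {k : H →L[ℂ] H}
    (hk : k.IsPositive) [FiniteDimensional ℂ (LinearMap.range (k : H →ₗ[ℂ] H))] :
    ∃ (r : ℕ) (e : Fin r → H) (μ : Fin r → ℝ), Orthonormal ℂ e ∧ (∀ i, 0 ≤ μ i) ∧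
      k = ∑ i, (μ i : ℂ) • rankOne ℂ (e i) (e i) ∧
      rangeProjection k = ∑ i, rankOne ℂ (e i) (e i) := by
  set V := (LinearMap.range (k : H →ₗ[ℂ] H)).topologicalClosure
  have hV : V = LinearMap.range (k : H →ₗ[ℂ] H) :=
    IsClosed.submodule_topologicalClosure_eq (Submodule.closed_of_finiteDimensional _)
  have : FiniteDimensional ℂ V := hV ▸ inferInstance
  have hkV : ∀ x ∈ V, k x ∈ V := fun x _ =>
    Submodule.le_topologicalClosure _ (LinearMap.mem_range_self _ x)
  have hT : ((k : H →ₗ[ℂ] H).restrict hkV).IsPositive :=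
    ⟨hk.isSymmetric.restrict_invariant hkV, fun x => hk.2 x⟩
  set B := hT.isSymmetric.eigenvectorBasis rfl
  have hB (i) : k (B i) = (hT.isSymmetric.eigenvalues rfl i : ℂ) • (B i : H) :=
    congrArg Subtype.val (hT.isSymmetric.apply_eigenvectorBasis rfl i)
  have hR : rangeProjection k = ∑ i, rankOne ℂ (B i : H) (B i : H) :=
    B.starProjection_eq_sum_rankOne
  refine ⟨_, fun i => B i, hT.isSymmetric.eigenvalues rfl,
    B.orthonormal.comp_linearIsometry V.subtypeₗᵢ, hT.nonneg_eigenvalues rfl, ?_, hR⟩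
  conv_lhs => rw [← mul_rangeProjection_of_isSelfAdjoint hk.isSelfAdjoint, hR, Finset.mul_sum]
  simp only [mul_def, comp_rankOne, hB, map_smul, smul_apply]

lemma IsStarProjection.isProjOp {p : H →L[ℂ] H} (hp : IsStarProjection p) : IsProjOp p :=
  ⟨hp.isSelfAdjoint, hp.isIdempotentElem⟩

lemma exists_fin_sum_of_mem_projectionSums {A : H →L[ℂ] H} (hA : A ∈ projectionSums ℂ H) :
    ∃ (n : ℕ) (p : Fin n → H →L[ℂ] H), (∀ j, IsProjOp (p j)) ∧ A = ∑ j, p j := by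
  obtain ⟨l, hl, rfl⟩ := AddSubmonoid.exists_list_of_mem_closure hA
  exact ⟨l.length, fun j => l[j], fun j => (hl _ (List.getElem_mem _)).isProjOp,
    (Fin.sum_univ_getElem l).symm⟩

theorem stmt14_general {ι : Type*} (b : HilbertBasis ι ℂ H)
    (k : H →L[ℂ] H) (hk : k.IsPositive)
    (hfin : FiniteDimensional ℂ (LinearMap.range (k : H →ₗ[ℂ] H)))
    (m : ℕ) (htr : traceAlong b k = m) :
    (∃ (n : ℕ) (p : Fin n → H →L[ℂ] H), (∀ j, IsProjOp (p j)) ∧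
        rangeProjection k + k = ∑ j, p j) ∧
    (∃ (n : ℕ) (p : Fin n → H →L[ℂ] H), (∀ j, IsProjOp (p j)) ∧ 1 + k = ∑ j, p j) := by
  obtain ⟨r, e, μ, he, hμ, hk_eq, hR_eq⟩ := hk.exists_orthonormal_eq_sum
  have htrace : ∑ i, μ i = m := by
    rw [hk_eq, traceAlong_sum_smul_rankOne_s14] at htr
    simpa [he.1] using htr
  have hsum : rangeProjection k + k ∈ projectionSums ℂ H := by
    have : rangeProjection k + k = ∑ i, ((1 + μ i : ℝ) : ℂ) • rankOne ℂ (e i) (e i) := by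
      rw [hR_eq, hk_eq, ← Finset.sum_add_distrib]
      simp [add_smul]
    rw [this]
    refine sum_smul_rankOne_mem_projectionSums he (c := fun i => 1 + μ i) (n := r + m)
      (fun i => add_pos_of_pos_of_nonneg one_pos (hμ i)) ?_ (by simp)
    rw [Finset.sum_add_distrib, htrace]
    simp
  refine ⟨exists_fin_sum_of_mem_projectionSums hsum, exists_fin_sum_of_mem_projectionSums ?_⟩
  rw [show 1 + k = (1 - rangeProjection k) + (rangeProjection k + k) by abel]
  exact add_mem (AddSubmonoid.subset_closure (isStarProjection_rangeProjection k).one_sub) hsum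

/-- If `k` is positive of finite rank with positive integer trace, then `R_k + k` is a
finite sum of projections, and hence so is `I + k`. -/
theorem stmt14 {ι : Type*} (b : HilbertBasis ι ℂ H)
    (k : H →L[ℂ] H) (hk : k.IsPositive)
    (hfin : FiniteDimensional ℂ (LinearMap.range (k : H →ₗ[ℂ] H)))
    (m : ℕ) (hm : 0 < m) (htr : traceAlong b k = m) :
    (∃ (n : ℕ) (p : Fin n → H →L[ℂ] H), (∀ j, IsProjOp (p j)) ∧
        rangeProjection k + k = ∑ j, p j) ∧
    (∃ (n : ℕ) (p : Fin n → H →L[ℂ] H), (∀ j, IsProjOp (p j)) ∧ 1 + k = ∑ j, p j) :=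
  stmt14_general b k hk hfin m htr
end

section
/- Let e₀, e₁, e₂, … be mutually orthogonal rank-one projections in B(H), let 1 < α ≤ 2 and 0 ≤ β < 1, and define n₁ = ⌈(1−β)/(α−1)⌉ and β₁ = β + n₁α − ⌊β + n₁α⌋. Then the operator a₁ = β e₀ + α Σ_{j=1}^{n₁−1} e_j + (α−β₁) e_{n₁} is positive with rank(a₁) ≤ tr(a₁), tr(a₁) = ⌊β + n₁α⌋ ∈ ℕ, and tr(a₁) ≤ ⌊α²/(α−1)⌋. -/
open scoped InnerProductSpace
open ContinuousLinearMap

variable {H : Type*} [NormedAddCommGroup H] [InnerProductSpace ℂ H] [CompleteSpace H]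

/-!
Write `a₁ = ∑_{j ≤ n₁} w_j e_j` with weights `w = (β, α, …, α, α - β₁)`; these are nonnegative
because `β₁` is the fractional part of `β + n₁α`. Positivity and the trace are then linear in
the `e_j`, each of trace `1`, so `tr a₁ = β + n₁α - β₁ = ⌊β + n₁α⌋`, while `rank a₁ ≤ n₁ + 1`.
Since `n₁` is a ceiling, `1 - β ≤ n₁(α - 1) < 1 - β + (α - 1)`: the left inequality says
`n₁ + 1 ≤ β + n₁α`, the right one gives `β + n₁α ≤ α²/(α - 1)`.
-/

theorem finrank_range_sum_smul_le_card {K V κ : Type*} [Field K] [AddCommGroup V] [Module K V]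
    (s : Finset κ) (c : κ → K) {f : κ → V →ₗ[K] V}
    (hf : ∀ j ∈ s, Module.finrank K (LinearMap.range (f j)) = 1) :
    Module.finrank K (LinearMap.range (∑ j ∈ s, c j • f j)) ≤ s.card := by
  apply Module.finrank_le_of_rank_le
  calc LinearMap.rank (∑ j ∈ s, c j • f j)
      ≤ ∑ j ∈ s, LinearMap.rank (c j • f j) := LinearMap.rank_finsetSum_le _ _
    _ ≤ ∑ j ∈ s, 1 := by
        gcongr with j hj
        rw [← Module.rank_eq_one_iff_finrank_eq_one.mpr (hf j hj)]
        exact Submodule.rank_mono (LinearMap.range_smul_le_range _ _)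
    _ = s.card := by simp

section StarProjection

variable {𝕜 E ι κ : Type*} [RCLike 𝕜] [NormedAddCommGroup E] [InnerProductSpace 𝕜 E]
  [CompleteSpace E]

theorem IsStarProjection.hasSum_re_inner_of_finrank_range_eq_one (b : HilbertBasis ι 𝕜 E)
    {p : E →L[𝕜] E} (hp : IsStarProjection p)
    (hr : Module.finrank 𝕜 (LinearMap.range (p : E →ₗ[𝕜] E)) = 1) :
    HasSum (fun i => RCLike.re ⟪b i, p (b i)⟫_𝕜) 1 := by
  obtain ⟨K, _, rfl⟩ := isStarProjection_iff_eq_starProjection.mp hp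
  have hK : Module.finrank 𝕜 K = 1 := by
    rwa [← Submodule.range_starProjection K]
  have : FiniteDimensional 𝕜 K := Module.finite_of_finrank_pos (by rw [hK]; exact one_pos)
  obtain ⟨v, hvK, hv0⟩ := Submodule.exists_mem_ne_zero_of_ne_bot
    (Submodule.finrank_eq_zero.not.mp (by rw [hK]; exact one_ne_zero))
  obtain rfl := eq_span_singleton_of_mem_of_finrank_eq_one hK hvK hv0
  have h := ((b.hasSum_inner_mul_inner v v).mapL RCLike.reCLM).div_const (‖v‖ ^ 2)
  rw [RCLike.reCLM_apply, inner_self_eq_norm_sq, div_self (by positivity)] at h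
  refine h.congr_fun fun i => ?_
  rw [Submodule.starProjection_singleton, inner_smul_right, div_mul_eq_mul_div,
    RCLike.div_re_ofReal]

variable (s : Finset κ) (w : κ → ℝ) {e : κ → E →L[𝕜] E}

theorem isPositive_sum_smul_of_isStarProjection (he : ∀ j ∈ s, IsStarProjection (e j))
    (hw : ∀ j ∈ s, 0 ≤ w j) : (∑ j ∈ s, (w j : 𝕜) • e j).IsPositive :=
  ContinuousLinearMap.isPositive_sum s fun j hj =>
    (ContinuousLinearMap.IsPositive.of_isStarProjection (he j hj)).smul_of_nonneg
      (RCLike.ofReal_nonneg.mpr (hw j hj))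

theorem hasSum_re_inner_sum_smul_of_isStarProjection (b : HilbertBasis ι 𝕜 E)
    (he : ∀ j ∈ s, IsStarProjection (e j))
    (hr : ∀ j ∈ s, Module.finrank 𝕜 (LinearMap.range (e j : E →ₗ[𝕜] E)) = 1) :
    HasSum (fun i => RCLike.re ⟪b i, (∑ j ∈ s, (w j : 𝕜) • e j) (b i)⟫_𝕜) (∑ j ∈ s, w j) := by
  have h := hasSum_sum fun j hj =>
    ((he j hj).hasSum_re_inner_of_finrank_range_eq_one b (hr j hj)).mul_left (w j)
  simp only [mul_one] at h
  refine h.congr_fun fun i => ?_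
  simp only [sum_apply, smul_apply, inner_sum, inner_smul_right, map_sum, RCLike.re_ofReal_mul]

end StarProjection

section BlockWeight

theorem Finset.sum_range_succ_eq_add_sum_Ico_add {M : Type*} [AddCommMonoid M] (f : ℕ → M)
    {n : ℕ} (hn : 1 ≤ n) : ∑ j ∈ range (n + 1), f j = f 0 + ∑ j ∈ Ico 1 n, f j + f n := by
  rw [sum_range_succ, range_eq_Ico, sum_eq_sum_Ico_succ_bot hn]

def blockWeight (β α γ : ℝ) (n j : ℕ) : ℝ :=
  if j = 0 then β else if j = n then γ else α

variable {β α γ : ℝ} {n : ℕ}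

theorem blockWeight_nonneg (hβ : 0 ≤ β) (hα : 0 ≤ α) (hγ : 0 ≤ γ) (j : ℕ) :
    0 ≤ blockWeight β α γ n j := by
  unfold blockWeight
  split_ifs <;> assumption

theorem blockWeight_of_mem_Ico {j : ℕ} (hj : j ∈ Finset.Ico 1 n) : blockWeight β α γ n j = α := by
  obtain ⟨h1, h2⟩ := Finset.mem_Ico.mp hj
  simp [blockWeight, Nat.one_le_iff_ne_zero.mp h1, h2.ne]

variable (hn : 1 ≤ n)
include hn

theorem sum_blockWeight :
    ∑ j ∈ Finset.range (n + 1), blockWeight β α γ n j = β + (n - 1) * α + γ := by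
  rw [Finset.sum_range_succ_eq_add_sum_Ico_add _ hn,
    Finset.sum_congr rfl fun j => blockWeight_of_mem_Ico]
  simp [blockWeight, Nat.one_le_iff_ne_zero.mp hn, Nat.cast_sub hn]

theorem sum_blockWeight_smul {𝕜 M : Type*} [RCLike 𝕜] [AddCommMonoid M] [Module 𝕜 M] (v : ℕ → M) :
    ∑ j ∈ Finset.range (n + 1), (blockWeight β α γ n j : 𝕜) • v j =
      (β : 𝕜) • v 0 + (α : 𝕜) • ∑ j ∈ Finset.Ico 1 n, v j + (γ : 𝕜) • v n := by
  rw [Finset.sum_range_succ_eq_add_sum_Ico_add _ hn,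
    Finset.sum_congr rfl fun j hj => by rw [blockWeight_of_mem_Ico hj], Finset.smul_sum]
  simp [blockWeight, Nat.one_le_iff_ne_zero.mp hn]

end BlockWeight

section CeilBounds

variable {α : ℝ} (hα : 1 < α)
include hα

theorem natCeil_add_one_le (β : ℝ) :
    (⌈(1 - β) / (α - 1)⌉₊ : ℝ) + 1 ≤ β + ⌈(1 - β) / (α - 1)⌉₊ * α := by
  have h := Nat.le_ceil ((1 - β) / (α - 1))
  rw [div_le_iff₀ (by linarith)] at h
  linarith

theorem add_natCeil_mul_le {β : ℝ} (hβ : 0 ≤ β) (hβ1 : β ≤ 1) :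
    β + ⌈(1 - β) / (α - 1)⌉₊ * α ≤ α ^ 2 / (α - 1) := by
  have hα1 : 0 < α - 1 := by linarith
  have h := Nat.ceil_lt_add_one (div_nonneg (sub_nonneg.mpr hβ1) hα1.le)
  rw [← sub_lt_iff_lt_add, lt_div_iff₀ hα1] at h
  rw [le_div_iff₀ hα1]
  nlinarith

end CeilBounds

theorem stmt16_general {ι : Type*} (bb : HilbertBasis ι ℂ H)
    (e : ℕ → H →L[ℂ] H) (he : ∀ j, IsProjOp (e j))
    (hrank : ∀ j, Module.finrank ℂ (LinearMap.range (e j : H →ₗ[ℂ] H)) = 1)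
    (α β : ℝ) (hα : 1 < α) (hβ : 0 ≤ β) (hβ1 : β < 1)
    (n₁ : ℕ) (hn₁ : n₁ = ⌈(1 - β) / (α - 1)⌉₊)
    (β₁ : ℝ) (hβ₁ : β₁ = β + n₁ * α - ⌊β + n₁ * α⌋)
    (a₁ : H →L[ℂ] H)
    (ha₁ : a₁ = (β : ℂ) • e 0 + (α : ℂ) • ∑ j ∈ Finset.Ico 1 n₁, e j +
      ((α - β₁ : ℝ) : ℂ) • e n₁) :
    a₁.IsPositive ∧
      (Module.finrank ℂ (LinearMap.range (a₁ : H →ₗ[ℂ] H)) : ℝ) ≤ traceAlong bb a₁ ∧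
      traceAlong bb a₁ = (⌊β + n₁ * α⌋ : ℝ) ∧ 1 ≤ ⌊β + n₁ * α⌋ ∧
      ⌊β + n₁ * α⌋ ≤ ⌊α ^ 2 / (α - 1)⌋ := by
  have hn₁1 : 1 ≤ n₁ := hn₁ ▸ Nat.ceil_pos.mpr (div_pos (by linarith) (by linarith))
  have hβ₁_lt : β₁ < 1 := hβ₁ ▸ Int.fract_lt_one (β + n₁ * α)
  set w := blockWeight β α (α - β₁) n₁
  have ha₁_eq : a₁ = ∑ j ∈ Finset.range (n₁ + 1), (w j : ℂ) • e j :=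
    ha₁.trans (sum_blockWeight_smul hn₁1 e).symm
  have hsp : ∀ j ∈ Finset.range (n₁ + 1), IsStarProjection (e j) :=
    fun j _ => ⟨(he j).2, (he j).1⟩
  have htr : traceAlong bb a₁ = ⌊β + n₁ * α⌋ := by
    have hsum : ∑ j ∈ Finset.range (n₁ + 1), w j = ⌊β + n₁ * α⌋ := by
      rw [sum_blockWeight hn₁1, hβ₁]
      ring
    rw [traceAlong, ha₁_eq, ← hsum]
    exact (hasSum_re_inner_sum_smul_of_isStarProjection _ w bb hsp fun j _ => hrank j).tsum_eq
  have hn₁_floor : (n₁ : ℤ) + 1 ≤ ⌊β + n₁ * α⌋ :=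
    Int.le_floor.mpr (by exact_mod_cast hn₁ ▸ natCeil_add_one_le hα β)
  refine ⟨ha₁_eq ▸ isPositive_sum_smul_of_isStarProjection _ w hsp fun j _ =>
      blockWeight_nonneg hβ (by linarith) (by linarith) j,
    ?_, htr, by omega, Int.floor_le_floor (hn₁ ▸ add_natCeil_mul_le hα hβ hβ1.le)⟩
  rw [htr, ha₁_eq, ContinuousLinearMap.toLinearMap_sum]
  simp_rw [ContinuousLinearMap.toLinearMap_smul]
  calc (Module.finrank ℂ _ : ℝ) ≤ (n₁ + 1 : ℕ) := by
        exact_mod_cast (finrank_range_sum_smul_le_card _ _ fun j _ => hrank j).trans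
          (Finset.card_range _).le
    _ ≤ ⌊β + n₁ * α⌋ := by exact_mod_cast hn₁_floor

/-- Arithmetic core of the block decomposition: with mutually orthogonal rank-one
projections `e j`, `1 < α ≤ 2`, `0 ≤ β < 1`, `n₁ = ⌈(1−β)/(α−1)⌉` and
`β₁ = β + n₁α − ⌊β + n₁α⌋`, the operator
`a₁ = β e₀ + α ∑_{j=1}^{n₁−1} e_j + (α−β₁) e_{n₁}` is positive with
`rank a₁ ≤ tr a₁`, `tr a₁ = ⌊β + n₁α⌋ ∈ ℕ`, and `tr a₁ ≤ ⌊α²/(α−1)⌋`. -/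
theorem stmt16 {ι : Type*} (bb : HilbertBasis ι ℂ H)
    (e : ℕ → H →L[ℂ] H) (he : ∀ j, IsProjOp (e j))
    (hrank : ∀ j, Module.finrank ℂ (LinearMap.range (e j : H →ₗ[ℂ] H)) = 1)
    (horth : ∀ i j, i ≠ j → e i * e j = 0)
    (α β : ℝ) (hα : 1 < α) (hα2 : α ≤ 2) (hβ : 0 ≤ β) (hβ1 : β < 1)
    (n₁ : ℕ) (hn₁ : n₁ = ⌈(1 - β) / (α - 1)⌉₊)
    (β₁ : ℝ) (hβ₁ : β₁ = β + n₁ * α - ⌊β + n₁ * α⌋)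
    (a₁ : H →L[ℂ] H)
    (ha₁ : a₁ = (β : ℂ) • e 0 + (α : ℂ) • ∑ j ∈ Finset.Ico 1 n₁, e j +
      ((α - β₁ : ℝ) : ℂ) • e n₁) :
    a₁.IsPositive ∧
      (Module.finrank ℂ (LinearMap.range (a₁ : H →ₗ[ℂ] H)) : ℝ) ≤ traceAlong bb a₁ ∧
      traceAlong bb a₁ = (⌊β + n₁ * α⌋ : ℝ) ∧ 1 ≤ ⌊β + n₁ * α⌋ ∧
      ⌊β + n₁ * α⌋ ≤ ⌊α ^ 2 / (α - 1)⌋ :=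
  stmt16_general bb e he hrank α β hα hβ hβ1 n₁ hn₁ β₁ hβ₁ a₁ ha₁
end
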